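/- arXiv:1907.07330 — 7 statements merged into one kernel-verified Lean document; each statement's English description precedes it below -/
import Mathlib

section
/- Let L : ℝ^d → ℝ^𝒴 be a polyhedral loss and let Γ(p) = argmin_{u∈ℝ^d} ⟨p, L(u)⟩. Then the collection of sets 𝒰 = {Γ(p) : p ∈ Δ_𝒴} is finite, and every element of 𝒰 is a nonempty closed convex polyhedron in ℝ^d (an intersection of finitely many closed halfspaces). -/
/-- The probability simplex over a finite outcome set `Y`. -/
def probSimplex (Y : Type*) [Fintype Y] : Set (Y → ℝ) :=
  {p | (∀ y, 0 ≤ p y) ∧ ∑ y, p y = 1}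

/-- Expected loss `⟨p, v⟩ = ∑ y, p y * v y`. -/
def elloss {Y : Type*} [Fintype Y] (p : Y → ℝ) (v : Y → ℝ) : ℝ :=
  ∑ y, p y * v y

/-- `u` minimizes the expected loss `⟨p, L ·⟩` over the report set. -/
def Minimizes {U Y : Type*} [Fintype Y] (p : Y → ℝ) (L : U → Y → ℝ) (u : U) : Prop :=
  ∀ u' : U, elloss p (L u) ≤ elloss p (L u')

/-- The Bayes risk `inf_u ⟨p, L u⟩`. -/
noncomputable def bayesRisk {U Y : Type*} [Fintype Y] (p : Y → ℝ) (L : U → Y → ℝ) : ℝ :=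
  sInf (Set.range fun u => elloss p (L u))

/-- `L` embeds the discrete loss `ℓ`. -/
def Embeds {R Y : Type*} [Fintype Y] {d : ℕ}
    (L : (Fin d → ℝ) → Y → ℝ) (ℓ : R → Y → ℝ) : Prop :=
  ∃ φ : R → (Fin d → ℝ), Function.Injective φ ∧ (∀ r, L (φ r) = ℓ r) ∧
    ∀ p ∈ probSimplex Y, ∀ r, Minimizes p ℓ r ↔ Minimizes p L (φ r)

/-- A polyhedral convex function: a pointwise maximum of finitely many affine functions. -/
def IsPolyhedralFn {d : ℕ} (g : (Fin d → ℝ) → ℝ) : Prop :=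
  ∃ (m : ℕ) (a : Fin (m + 1) → Fin d → ℝ) (b : Fin (m + 1) → ℝ),
    ∀ x, g x = Finset.univ.sup' Finset.univ_nonempty (fun i => ∑ j, a i j * x j + b i)

/-- A (closed convex) polyhedron in `ℝ^d`: an intersection of finitely many closed halfspaces. -/
def IsPolyhedron {d : ℕ} (S : Set (Fin d → ℝ)) : Prop :=
  ∃ (m : ℕ) (a : Fin m → Fin d → ℝ) (b : Fin m → ℝ),
    S = {x | ∀ i, ∑ j, a i j * x j ≤ b i}

open Finset

/-- 1D attainment: lines `α i * z + β i`, with pairwise FM bounds by `G`, admit a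
common point `z` where the max is `≤ G`. -/
lemma oneDim_attain {ι : Type*} [Fintype ι] (α β : ι → ℝ) (G : ℝ)
    (hz : ∀ i, α i = 0 → β i ≤ G)
    (hpair : ∀ i j, α i < 0 → 0 < α j → α j * β i - α i * β j ≤ (α j - α i) * G) :
    ∃ z : ℝ, ∀ i, α i * z + β i ≤ G := by
  classical
  set A : Finset ι := Finset.univ.filter (fun i => α i < 0) with hA
  set B : Finset ι := Finset.univ.filter (fun i => 0 < α i) with hB
  -- lower and upper bounds for z
  set lo : ι → ℝ := fun i => (β i - G) / (-α i) with hlo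
  set hi : ι → ℝ := fun j => (G - β j) / (α j) with hhi
  have key : ∀ i ∈ A, ∀ j ∈ B, lo i ≤ hi j := by
    intro i hi' j hj'
    have hai : α i < 0 := (Finset.mem_filter.mp hi').2
    have haj : 0 < α j := (Finset.mem_filter.mp hj').2
    have h := hpair i j hai haj
    rw [div_le_div_iff₀ (by linarith) haj]
    nlinarith
  have hloA : ∀ i ∈ A, ∀ z, lo i ≤ z → α i * z + β i ≤ G := by
    intro i hi' z hz'
    have hai : α i < 0 := (Finset.mem_filter.mp hi').2
    have : (β i - G) / (-α i) ≤ z := hz'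
    rw [div_le_iff₀ (by linarith)] at this
    nlinarith
  have hhiB : ∀ j ∈ B, ∀ z, z ≤ hi j → α j * z + β j ≤ G := by
    intro j hj' z hz'
    have haj : 0 < α j := (Finset.mem_filter.mp hj').2
    have : z ≤ (G - β j) / α j := hz'
    rw [le_div_iff₀ haj] at this
    nlinarith
  have hzero : ∀ i, i ∉ A → i ∉ B → ∀ z : ℝ, α i * z + β i ≤ G := by
    intro i hiA hiB z
    have h0 : α i = 0 := by
      by_contra h
      rcases lt_or_gt_of_ne h with h' | h'
      · exact hiA (Finset.mem_filter.mpr ⟨Finset.mem_univ _, h'⟩)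
      · exact hiB (Finset.mem_filter.mpr ⟨Finset.mem_univ _, h'⟩)
    simpa [h0] using hz i h0
  rcases eq_or_ne A ∅ with hAe | hAne
  · rcases eq_or_ne B ∅ with hBe | hBne
    · exact ⟨0, fun i => hzero i (by simp [hAe]) (by simp [hBe]) 0⟩
    · obtain ⟨j0, hj0⟩ := Finset.nonempty_iff_ne_empty.mpr hBne
      refine ⟨B.inf' ⟨j0, hj0⟩ hi, fun i => ?_⟩
      by_cases hiB : i ∈ B
      · exact hhiB i hiB _ (Finset.inf'_le _ hiB)
      · exact hzero i (by simp [hAe]) hiB _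
  · obtain ⟨i0, hi0⟩ := Finset.nonempty_iff_ne_empty.mpr hAne
    refine ⟨A.sup' ⟨i0, hi0⟩ lo, fun i => ?_⟩
    by_cases hiA : i ∈ A
    · exact hloA i hiA _ (Finset.le_sup' lo hiA)
    · by_cases hiB : i ∈ B
      · refine hhiB i hiB _ ?_
        obtain ⟨i1, hi1, hmax⟩ := Finset.exists_mem_eq_sup' (⟨i0, hi0⟩ : A.Nonempty) lo
        rw [hmax]
        exact key i1 hi1 i hiB
      · exact hzero i hiA hiB _

/-- Max of finitely many affine functions. -/
noncomputable def maxAff {n : ℕ} {ι : Type*} [Fintype ι] [Nonempty ι]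
    (c : ι → Fin n → ℝ) (b : ι → ℝ) (x : Fin n → ℝ) : ℝ :=
  Finset.univ.sup' Finset.univ_nonempty fun i => ∑ j, c i j * x j + b i

lemma le_maxAff {n : ℕ} {ι : Type*} [Fintype ι] [Nonempty ι]
    (c : ι → Fin n → ℝ) (b : ι → ℝ) (x : Fin n → ℝ) (i : ι) :
    ∑ j, c i j * x j + b i ≤ maxAff c b x := by
  unfold maxAff; exact Finset.le_sup' (fun i => ∑ j, c i j * x j + b i) (Finset.mem_univ i)

lemma maxAff_le {n : ℕ} {ι : Type*} [Fintype ι] [Nonempty ι]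
    {c : ι → Fin n → ℝ} {b : ι → ℝ} {x : Fin n → ℝ} {G : ℝ}
    (h : ∀ i, ∑ j, c i j * x j + b i ≤ G) : maxAff c b x ≤ G := by
  unfold maxAff; exact Finset.sup'_le _ _ fun i _ => h i

/-- A bounded-below max of affine functions attains its infimum. -/
lemma maxAff_attain : ∀ (n : ℕ) {ι : Type u} [Fintype ι] [Nonempty ι]
    (c : ι → Fin n → ℝ) (b : ι → ℝ) (m : ℝ),
    (∀ x, m ≤ maxAff c b x) → ∃ x, ∀ x', maxAff c b x ≤ maxAff c b x' := by
  intro n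
  induction n with
  | zero =>
    intro ι _ _ c b m hm
    refine ⟨fun _ => 0, fun x' => ?_⟩
    have h : (fun _ => (0:ℝ)) = x' := Subsingleton.elim _ _
    rw [h]
  | succ n ih =>
    intro ι _ _ c b m hm
    classical
    set c' : ι → Fin n → ℝ := fun i j => c i j.castSucc with hc'
    set α : ι → ℝ := fun i => c i (Fin.last n) with hα
    have hsnoc : ∀ (i : ι) (w : Fin n → ℝ) (z : ℝ),
        ∑ j, c i j * (Fin.snoc w z : Fin (n+1) → ℝ) j + b i
          = (∑ j, c' i j * w j) + α i * z + b i := by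
      intro i w z
      rw [Fin.sum_univ_castSucc]
      simp only [Fin.snoc_castSucc, Fin.snoc_last, hc', hα]
    -- the pair type for Fourier–Motzkin elimination
    have hκ : Nonempty {q : ι × ι // α q.1 ≤ 0 ∧ 0 ≤ α q.2} := by
      by_contra hk
      have hval : ∀ z : ℝ, maxAff c b (Fin.snoc (fun _ => 0) z)
          = Finset.univ.sup' Finset.univ_nonempty (fun i => α i * z + b i) := by
        intro z
        refine Finset.sup'_congr _ rfl (fun i _ => ?_)
        rw [hsnoc]; simp
      have hcase : (∀ i, 0 < α i) ∨ (∀ i, α i < 0) := by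
        by_cases hex : ∃ i, α i ≤ 0
        · right; intro i
          by_contra h
          push_neg at h
          obtain ⟨i0, hi0⟩ := hex
          exact hk ⟨⟨(i0, i), hi0, h⟩⟩
        · left; intro i
          push_neg at hex
          exact hex i
      set bM : ℝ := Finset.univ.sup' Finset.univ_nonempty b with hbM
      have hbMle : ∀ i, b i ≤ bM := fun i => Finset.le_sup' _ (Finset.mem_univ i)
      have hmbM : m ≤ bM := by
        have := hm (Fin.snoc (fun _ => 0) 0)
        rw [hval 0] at this
        refine le_trans this (Finset.sup'_le _ _ fun i _ => by simpa using hbMle i)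
      rcases hcase with hpos | hneg
      · set αm : ℝ := Finset.univ.inf' Finset.univ_nonempty α with hαm
        have hαm0 : 0 < αm := by
          obtain ⟨i1, _, hi1⟩ := Finset.exists_mem_eq_inf' (Finset.univ_nonempty) α
          rw [hαm, hi1]; exact hpos i1
        have hαmle : ∀ i, αm ≤ α i := fun i => Finset.inf'_le _ (Finset.mem_univ i)
        set z : ℝ := (m - bM - 1) / αm with hz
        have hz0 : z ≤ 0 := by
          apply div_nonpos_of_nonpos_of_nonneg <;> linarith
        have hzval : αm * z = m - bM - 1 := by
          rw [hz, mul_div_cancel₀ _ (ne_of_gt hαm0)]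
        have := hm (Fin.snoc (fun _ => 0) z)
        rw [hval z] at this
        have hlt : Finset.univ.sup' Finset.univ_nonempty (fun i => α i * z + b i) ≤ m - 1 := by
          refine Finset.sup'_le _ _ fun i _ => ?_
          have h1 : α i * z ≤ αm * z := mul_le_mul_of_nonpos_right (hαmle i) hz0
          have := hbMle i
          linarith [hzval]
        linarith
      · set αM : ℝ := Finset.univ.sup' Finset.univ_nonempty α with hαM
        have hαM0 : αM < 0 := by
          obtain ⟨i1, _, hi1⟩ := Finset.exists_mem_eq_sup' (Finset.univ_nonempty) α
          rw [hαM, hi1]; exact hneg i1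
        have hαMle : ∀ i, α i ≤ αM := fun i => Finset.le_sup' _ (Finset.mem_univ i)
        set z : ℝ := (m - bM - 1) / αM with hz
        have hz0 : 0 ≤ z := by
          rw [hz]
          exact (div_pos_iff.mpr (Or.inr ⟨by linarith, hαM0⟩)).le
        have hzval : αM * z = m - bM - 1 := by
          rw [hz, mul_div_cancel₀ _ (ne_of_lt hαM0)]
        have := hm (Fin.snoc (fun _ => 0) z)
        rw [hval z] at this
        have hlt : Finset.univ.sup' Finset.univ_nonempty (fun i => α i * z + b i) ≤ m - 1 := by
          refine Finset.sup'_le _ _ fun i _ => ?_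
          have h1 : α i * z ≤ αM * z := mul_le_mul_of_nonneg_right (hαMle i) hz0
          have := hbMle i
          linarith [hzval]
        linarith
    haveI := hκ
    set κT := {q : ι × ι // α q.1 ≤ 0 ∧ 0 ≤ α q.2} with hκT
    set lam : κT → ℝ := fun q =>
      if α q.1.2 - α q.1.1 = 0 then 1 else α q.1.2 / (α q.1.2 - α q.1.1) with hlam
    have hlam_props : ∀ q : κT, 0 ≤ lam q ∧ lam q ≤ 1 ∧
        lam q * α q.1.1 + (1 - lam q) * α q.1.2 = 0 := by
      intro q
      obtain ⟨h1, h2⟩ := q.2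
      by_cases h : α q.1.2 - α q.1.1 = 0
      · have h0 : α q.1.1 = 0 := le_antisymm h1 (by linarith)
        have h0' : α q.1.2 = 0 := by linarith
        simp [hlam, h, h0, h0']
      · have hd : 0 < α q.1.2 - α q.1.1 := lt_of_le_of_ne (by linarith) (Ne.symm h)
        have hl : lam q = α q.1.2 / (α q.1.2 - α q.1.1) := by simp [hlam, h]
        refine ⟨by rw [hl]; positivity, ?_, ?_⟩
        · rw [hl, div_le_one hd]; linarith
        · rw [hl]; field_simp; ring
    set C : κT → Fin n → ℝ := fun q j => lam q * c' q.1.1 j + (1 - lam q) * c' q.1.2 j with hC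
    set B : κT → ℝ := fun q => lam q * b q.1.1 + (1 - lam q) * b q.1.2 with hB
    have hexp : ∀ (q : κT) (w : Fin n → ℝ), ∑ j, C q j * w j + B q
        = lam q * ((∑ j, c' q.1.1 j * w j) + b q.1.1)
          + (1 - lam q) * ((∑ j, c' q.1.2 j * w j) + b q.1.2) := by
      intro q w
      have : ∑ j, C q j * w j = lam q * (∑ j, c' q.1.1 j * w j)
          + (1 - lam q) * (∑ j, c' q.1.2 j * w j) := by
        simp only [hC, add_mul, Finset.sum_add_distrib, Finset.mul_sum, mul_assoc]
      rw [this, hB]; ring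
    -- FM lower bound: maxAff C B w ≤ maxAff c b (snoc w z)
    have hlow : ∀ (w : Fin n → ℝ) (z : ℝ), maxAff C B w ≤ maxAff c b (Fin.snoc w z) := by
      intro w z
      refine maxAff_le fun q => ?_
      obtain ⟨hl0, hl1, hsl⟩ := hlam_props q
      have e1 := hsnoc q.1.1 w z
      have e2 := hsnoc q.1.2 w z
      have b1 := le_maxAff c b (Fin.snoc w z) q.1.1
      have b2 := le_maxAff c b (Fin.snoc w z) q.1.2
      rw [hexp q w]
      rw [e1] at b1; rw [e2] at b2
      have key : lam q * ((∑ j, c' q.1.1 j * w j) + α q.1.1 * z + b q.1.1)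
          + (1 - lam q) * ((∑ j, c' q.1.2 j * w j) + α q.1.2 * z + b q.1.2)
          ≤ maxAff c b (Fin.snoc w z) := by
        nlinarith [mul_le_mul_of_nonneg_left b1 hl0,
          mul_le_mul_of_nonneg_left b2 (by linarith : (0:ℝ) ≤ 1 - lam q)]
      have hzz : (lam q * α q.1.1 + (1 - lam q) * α q.1.2) * z = 0 := by rw [hsl]; ring
      nlinarith [key, hzz]
    -- 1D attainment at any w
    have h1d : ∀ w : Fin n → ℝ, ∃ z : ℝ,
        maxAff c b (Fin.snoc w z) ≤ maxAff C B w := by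
      intro w
      set G : ℝ := maxAff C B w with hG
      set β : ι → ℝ := fun i => (∑ j, c' i j * w j) + b i with hβ
      have hterm : ∀ q : κT, lam q * β q.1.1 + (1 - lam q) * β q.1.2 ≤ G := by
        intro q
        have := le_maxAff C B w q
        rw [hexp q w] at this
        exact this
      obtain ⟨z, hz⟩ := oneDim_attain α β G
        (by
          intro i h0
          have hq : α (i, i).1 ≤ 0 ∧ 0 ≤ α (i, i).2 := by constructor <;> simp [h0]
          have := hterm ⟨(i, i), hq⟩
          have hl : lam ⟨(i, i), hq⟩ = 1 := by simp [hlam]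
          rw [hl] at this; simpa using this)
        (by
          intro i j hi hj
          have hq : α (i, j).1 ≤ 0 ∧ 0 ≤ α (i, j).2 := ⟨le_of_lt hi, le_of_lt hj⟩
          have hd : α j - α i ≠ 0 := by intro h; simp at *; linarith
          have hdpos : 0 < α j - α i := by linarith
          have := hterm ⟨(i, j), hq⟩
          have hl : lam ⟨(i, j), hq⟩ = α j / (α j - α i) := by simp [hlam, hd]
          rw [hl] at this
          have h2 : (α j - α i) * (α j / (α j - α i) * β i + (1 - α j / (α j - α i)) * β j)
              ≤ (α j - α i) * G := by
            exact mul_le_mul_of_nonneg_left this (le_of_lt hdpos)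
          have h3 : (α j - α i) * (α j / (α j - α i) * β i + (1 - α j / (α j - α i)) * β j)
              = α j * β i - α i * β j := by
            field_simp; ring
          rw [← h3]; exact h2)
      refine ⟨z, maxAff_le fun i => ?_⟩
      rw [hsnoc]
      have := hz i
      simp only [hβ] at this
      linarith
    -- bounded below for the eliminated system
    have hmC : ∀ w, m ≤ maxAff C B w := by
      intro w
      obtain ⟨z, hz⟩ := h1d w
      exact le_trans (hm _) hz
    obtain ⟨w0, hw0⟩ := ih C B m hmC
    obtain ⟨z0, hz0⟩ := h1d w0
    refine ⟨Fin.snoc w0 z0, fun x => ?_⟩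
    calc maxAff c b (Fin.snoc w0 z0) ≤ maxAff C B w0 := hz0
      _ ≤ maxAff C B (Fin.init x) := hw0 _
      _ ≤ maxAff c b (Fin.snoc (Fin.init x) (x (Fin.last n))) := hlow _ _
      _ = maxAff c b x := by rw [Fin.snoc_init_self]

lemma linmap_sum_smul {X : Type*} [AddCommGroup X] [Module ℝ X]
    (g : X → ℝ) (hg : IsLinearMap ℝ g) {κ : Type*} (s : Finset κ) (f : κ → X) (r : ℝ) :
    g (r • ∑ i ∈ s, f i) = r * ∑ i ∈ s, g (f i) := by
  have h1 : g (r • ∑ i ∈ s, f i) = (IsLinearMap.mk' g hg) (r • ∑ i ∈ s, f i) := rfl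
  rw [h1, map_smul, map_sum, smul_eq_mul]
  simp only [IsLinearMap.mk'_apply]

lemma linmap_affine {X : Type*} [AddCommGroup X] [Module ℝ X]
    (g : X → ℝ) (hg : IsLinearMap ℝ g) (xb x : X) (ε : ℝ) :
    g (xb + ε • (xb - x)) = g xb + ε * (g xb - g x) := by
  have h1 : ∀ z, g z = (IsLinearMap.mk' g hg) z := fun _ => rfl
  rw [h1, map_add, map_smul, map_sub, smul_eq_mul]
  simp only [IsLinearMap.mk'_apply]

/-- The argmin set of a linear functional over a polyhedron is the subset of the
polyhedron where all "always-tight" constraints are tight. -/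
lemma face_lemma {X : Type*} [AddCommGroup X] [Module ℝ X] {ι : Type*} [Fintype ι]
    (A : ι → X → ℝ) (hA : ∀ i, IsLinearMap ℝ (A i)) (b : ι → ℝ)
    (c : X → ℝ) (hc : IsLinearMap ℝ c)
    (F : Set X)
    (hF : F = {x | (∀ i, A i x ≤ b i) ∧ ∀ x', (∀ i, A i x' ≤ b i) → c x ≤ c x'})
    (hne : F.Nonempty) :
    F = {x | (∀ i, A i x ≤ b i) ∧ ∀ i, (∀ z ∈ F, A i z = b i) → A i x = b i} := by
  classical
  obtain ⟨x₀, hx₀mem⟩ := hne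
  have hx₀ : (∀ i, A i x₀ ≤ b i) ∧ ∀ x', (∀ i, A i x' ≤ b i) → c x₀ ≤ c x' := by
    rw [hF] at hx₀mem; exact hx₀mem
  set v : ℝ := c x₀ with hv
  have hFv : ∀ x ∈ F, c x = v ∧ ∀ i, A i x ≤ b i := by
    intro x hx; rw [hF] at hx
    exact ⟨le_antisymm (hx.2 x₀ hx₀.1) (hx₀.2 x hx.1), hx.1⟩
  have hmem : ∀ x, (∀ i, A i x ≤ b i) → c x = v → x ∈ F := by
    intro x h1 h2; rw [hF]
    exact ⟨h1, fun x' hx' => by rw [h2]; exact hx₀.2 x' hx'⟩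
  have hvmin : ∀ x, (∀ i, A i x ≤ b i) → v ≤ c x := fun x hx => hx₀.2 x hx
  set J : Finset ι := Finset.univ.filter (fun i => ¬ ∀ z ∈ F, A i z = b i) with hJ
  have hslack : ∀ i ∈ J, ∃ z ∈ F, A i z < b i := by
    intro i hi
    have h1 : ¬ ∀ z ∈ F, A i z = b i := (Finset.mem_filter.mp hi).2
    push_neg at h1
    obtain ⟨z, hz, hzne⟩ := h1
    exact ⟨z, hz, lt_of_le_of_ne ((hFv z hz).2 i) hzne⟩
  -- a point of F slack on all of J
  have hxbar : ∃ xb ∈ F, ∀ i ∈ J, A i xb < b i := by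
    rcases Finset.eq_empty_or_nonempty J with hJe | hJne
    · exact ⟨x₀, by rw [hF]; exact hx₀, by simp [hJe]⟩
    · choose zf hzF hzlt using hslack
      set k : ℝ := (J.card : ℝ) with hk
      have hkpos : 0 < k := by
        rw [hk]; exact_mod_cast Finset.card_pos.mpr hJne
      set xb : X := k⁻¹ • ∑ i ∈ J.attach, zf i.1 i.2 with hxb
      have hgxb : ∀ g : X → ℝ, IsLinearMap ℝ g →
          g xb = k⁻¹ * ∑ i ∈ J.attach, g (zf i.1 i.2) := by
        intro g hg; rw [hxb]; exact linmap_sum_smul g hg _ _ _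
      have hcard : (J.attach.card : ℝ) = k := by rw [Finset.card_attach, hk]
      have hxbP : ∀ i, A i xb ≤ b i := by
        intro i
        rw [hgxb (A i) (hA i)]
        have hsum : ∑ q ∈ J.attach, A i (zf q.1 q.2) ≤ k * b i := by
          calc ∑ q ∈ J.attach, A i (zf q.1 q.2) ≤ ∑ q ∈ J.attach, b i :=
                Finset.sum_le_sum fun q _ => (hFv _ (hzF q.1 q.2)).2 i
            _ = k * b i := by rw [Finset.sum_const, nsmul_eq_mul, hcard]
        calc k⁻¹ * ∑ q ∈ J.attach, A i (zf q.1 q.2) ≤ k⁻¹ * (k * b i) :=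
              mul_le_mul_of_nonneg_left hsum (by positivity)
          _ = b i := by field_simp
      have hxbv : c xb = v := by
        rw [hgxb c hc]
        have : ∑ q ∈ J.attach, c (zf q.1 q.2) = k * v := by
          rw [Finset.sum_congr rfl fun q _ => (hFv _ (hzF q.1 q.2)).1,
            Finset.sum_const, nsmul_eq_mul, hcard]
        rw [this]; field_simp
      refine ⟨xb, hmem xb hxbP hxbv, fun i hi => ?_⟩
      rw [hgxb (A i) (hA i)]
      have hsum : ∑ q ∈ J.attach, A i (zf q.1 q.2) < k * b i := by
        have := Finset.sum_lt_sum (s := J.attach)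
          (f := fun q : {x // x ∈ J} => A i (zf q.1 q.2)) (g := fun _ => b i)
          (fun q _ => (hFv _ (hzF q.1 q.2)).2 i)
          ⟨⟨i, hi⟩, Finset.mem_attach _ _, hzlt i hi⟩
        calc ∑ q ∈ J.attach, A i (zf q.1 q.2) < ∑ _q ∈ J.attach, b i := this
          _ = k * b i := by rw [Finset.sum_const, nsmul_eq_mul, hcard]
      calc k⁻¹ * ∑ q ∈ J.attach, A i (zf q.1 q.2) < k⁻¹ * (k * b i) :=
            mul_lt_mul_of_pos_left hsum (by positivity)
        _ = b i := by field_simp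
  obtain ⟨xb, hxbF, hxbslack⟩ := hxbar
  have hxbv := (hFv xb hxbF).1
  have hxbP := (hFv xb hxbF).2
  apply Set.eq_of_subset_of_subset
  · intro x hx
    exact ⟨(hFv x hx).2, fun i hi => hi x hx⟩
  · rintro x ⟨hxP, hxT⟩
    -- choose ε
    have hεex : ∃ ε : ℝ, 0 < ε ∧ ∀ i ∈ J, ε * (A i xb - A i x) < b i - A i xb := by
      rcases Finset.eq_empty_or_nonempty J with hJe | hJne
      · exact ⟨1, one_pos, by simp [hJe]⟩
      · set δ : ℝ := J.inf' hJne (fun i => b i - A i xb) with hδ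
        have hδpos : 0 < δ := by
          obtain ⟨i1, hi1, he⟩ := Finset.exists_mem_eq_inf' hJne (fun i => b i - A i xb)
          rw [hδ, he]
          linarith [hxbslack i1 hi1]
        set M : ℝ := J.sup' hJne (fun i => |A i xb - A i x|) with hM
        have hM0 : 0 ≤ M := by
          obtain ⟨i1, hi1⟩ := hJne
          rw [hM]
          exact le_trans (abs_nonneg (A i1 xb - A i1 x)) (Finset.le_sup' (fun i => |A i xb - A i x|) hi1)
        refine ⟨δ / (1 + M), by positivity, fun i hi => ?_⟩
        have h1 : A i xb - A i x ≤ M := by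
          rw [hM]
          exact le_trans (le_abs_self _) (Finset.le_sup' (fun i => |A i xb - A i x|) hi)
        have h2 : δ / (1 + M) * (A i xb - A i x) ≤ δ / (1 + M) * M :=
          mul_le_mul_of_nonneg_left h1 (by positivity)
        have h3 : δ / (1 + M) * M < δ := by
          rw [div_mul_eq_mul_div, div_lt_iff₀ (by positivity)]
          nlinarith
        have h4 : δ ≤ b i - A i xb := Finset.inf'_le _ hi
        linarith
    obtain ⟨ε, hεpos, hεsl⟩ := hεex
    set y : X := xb + ε • (xb - x) with hy
    have hyP : ∀ i, A i y ≤ b i := by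
      intro i
      rw [hy, linmap_affine (A i) (hA i)]
      by_cases hiJ : i ∈ J
      · linarith [hεsl i hiJ]
      · have hiI : ∀ z ∈ F, A i z = b i := by
          by_contra h
          exact hiJ (Finset.mem_filter.mpr ⟨Finset.mem_univ _, h⟩)
        rw [hiI xb hxbF, hxT i hiI]
        simp
    have hvy : v ≤ c y := hvmin y hyP
    have hcy : c y = v + ε * (v - c x) := by
      rw [hy, linmap_affine c hc, hxbv]
    have hcxv : c x ≤ v := by
      rw [hcy] at hvy
      nlinarith
    exact hmem x hxP (le_antisymm hcxv (hvmin x hxP))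

/-- Sum of weighted sups equals sup over selections, for nonnegative weights. -/
lemma sum_sup' {Y : Type*} [Fintype Y] [DecidableEq Y] (mm : Y → ℕ)
    (p : Y → ℝ) (hp : ∀ y, 0 ≤ p y) (v : ∀ y, Fin (mm y + 1) → ℝ) :
    ∑ y, p y * (Finset.univ.sup' Finset.univ_nonempty (v y))
      = Finset.univ.sup' Finset.univ_nonempty
          (fun σ : (∀ y, Fin (mm y + 1)) => ∑ y, p y * v y (σ y)) := by
  apply le_antisymm
  · have hch : ∀ y : Y, ∃ i, Finset.univ.sup' Finset.univ_nonempty (v y) = v y i := by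
      intro y
      obtain ⟨i, _, hi⟩ := Finset.exists_mem_eq_sup' Finset.univ_nonempty (v y)
      exact ⟨i, hi⟩
    choose σ hσ using hch
    calc ∑ y, p y * Finset.univ.sup' Finset.univ_nonempty (v y)
        = ∑ y, p y * v y (σ y) := Finset.sum_congr rfl fun y _ => by rw [hσ y]
      _ ≤ _ := Finset.le_sup' (fun τ : (∀ y, Fin (mm y + 1)) => ∑ y, p y * v y (τ y))
          (Finset.mem_univ σ)
  · refine Finset.sup'_le _ _ fun σ _ => Finset.sum_le_sum fun y _ => ?_
    exact mul_le_mul_of_nonneg_left (Finset.le_sup' (v y) (Finset.mem_univ (σ y))) (hp y)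
/-- For a polyhedral loss, the collection `𝒰 = {Γ(p) : p ∈ Δ_𝒴}` of sets of
minimizers is finite, and each `Γ(p)` is a nonempty closed convex polyhedron. -/
theorem polyhedral_loss_minimizer_sets_finite_polyhedra
    {Y : Type*} [Fintype Y] {d : ℕ}
    (L : (Fin d → ℝ) → Y → ℝ) (hL0 : ∀ u y, 0 ≤ L u y)
    (hpoly : ∀ y, IsPolyhedralFn (fun u => L u y)) :
    ({S | ∃ p ∈ probSimplex Y, S = {u | Minimizes p L u}}).Finite ∧
    ∀ p ∈ probSimplex Y,
      ({u | Minimizes p L u}).Nonempty ∧ IsPolyhedron {u | Minimizes p L u} := by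
  classical
  simp only [IsPolyhedralFn] at hpoly
  choose mm aa bb hLrep using hpoly
  haveI : DecidableEq Y := Classical.decEq Y
  haveI : Nonempty (∀ y : Y, Fin (mm y + 1)) := ⟨fun y => 0⟩
  -- the lifted polyhedron data
  set A : (Σ y : Y, Fin (mm y + 1)) → ((Fin d → ℝ) × (Y → ℝ)) → ℝ :=
    fun q x => (∑ j, aa q.1 q.2 j * x.1 j) - x.2 q.1 with hAdef
  set bc : (Σ y : Y, Fin (mm y + 1)) → ℝ := fun q => -(bb q.1 q.2) with hbcdef
  have hAlin : ∀ q, IsLinearMap ℝ (A q) := by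
    intro q
    constructor
    · intro x y
      simp only [hAdef, Prod.fst_add, Prod.snd_add, Pi.add_apply, mul_add,
        Finset.sum_add_distrib]
      ring
    · intro r x
      have h : ∑ j, aa q.1 q.2 j * (r * x.1 j) = r * ∑ j, aa q.1 q.2 j * x.1 j := by
        rw [Finset.mul_sum]
        exact Finset.sum_congr rfl fun j _ => by ring
      simp only [hAdef, Prod.smul_fst, Prod.smul_snd, Pi.smul_apply, smul_eq_mul]
      rw [h]
      ring
  set Φ : Set (Σ y : Y, Fin (mm y + 1)) → Set (Fin d → ℝ) :=
    fun I => {u | ∃ t : Y → ℝ, (∀ q, A q (u, t) ≤ bc q) ∧ ∀ q ∈ I, A q (u, t) = bc q}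
    with hΦdef
  -- constraint satisfaction ↔ componentwise domination of L
  have hPiff : ∀ (u : Fin d → ℝ) (t : Y → ℝ),
      (∀ q : (Σ y : Y, Fin (mm y + 1)), A q (u, t) ≤ bc q) ↔ (∀ y, L u y ≤ t y) := by
    intro u t
    constructor
    · intro h y
      rw [hLrep y u]
      refine Finset.sup'_le _ _ fun i _ => ?_
      have h2 := h ⟨y, i⟩
      simp only [hAdef, hbcdef] at h2
      linarith
    · intro h q
      have h2 : ∑ j, aa q.1 q.2 j * u j + bb q.1 q.2 ≤ L u q.1 := by
        rw [hLrep q.1 u]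
        exact Finset.le_sup' (fun i => ∑ j, aa q.1 i j * u j + bb q.1 i)
          (Finset.mem_univ q.2)
      have h3 := h q.1
      simp only [hAdef, hbcdef]
      linarith
  have main : ∀ p ∈ probSimplex Y,
      (∃ I, {u | Minimizes p L u} = Φ I) ∧
      ({u | Minimizes p L u}).Nonempty ∧ IsPolyhedron {u | Minimizes p L u} := by
    intro p hp
    obtain ⟨hp0, hp1⟩ := hp
    -- the affine representation of the expected loss
    set Cp : (∀ y : Y, Fin (mm y + 1)) → Fin d → ℝ :=
      fun σ j => ∑ y, p y * aa y (σ y) j with hCpdef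
    set Dp : (∀ y : Y, Fin (mm y + 1)) → ℝ := fun σ => ∑ y, p y * bb y (σ y) with hDpdef
    have hrep : ∀ u, elloss p (L u) = maxAff Cp Dp u := by
      intro u
      unfold maxAff
      have h1 : elloss p (L u) = ∑ y, p y * Finset.univ.sup' Finset.univ_nonempty
          (fun i => ∑ j, aa y i j * u j + bb y i) := by
        unfold elloss
        exact Finset.sum_congr rfl fun y _ => by rw [hLrep y u]
      rw [h1, sum_sup' mm p hp0 (fun y i => ∑ j, aa y i j * u j + bb y i)]
      refine Finset.sup'_congr _ rfl fun σ _ => ?_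
      simp only [mul_add, Finset.sum_add_distrib, hCpdef, hDpdef]
      congr 1
      simp only [Finset.mul_sum, Finset.sum_mul]
      rw [Finset.sum_comm]
      exact Finset.sum_congr rfl fun j _ => Finset.sum_congr rfl fun y _ => by ring
    -- attainment of the minimum
    have hbd : ∀ u, (0:ℝ) ≤ maxAff Cp Dp u := by
      intro u
      rw [← hrep u]
      exact Finset.sum_nonneg fun y _ => mul_nonneg (hp0 y) (hL0 u y)
    obtain ⟨u0, hu0max⟩ := maxAff_attain d Cp Dp 0 hbd
    have hu0 : Minimizes p L u0 := by
      intro u'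
      rw [hrep u0, hrep u']
      exact hu0max u'
    -- objective functional
    set cp : ((Fin d → ℝ) × (Y → ℝ)) → ℝ := fun x => ∑ y, p y * x.2 y with hcpdef
    have hcplin : IsLinearMap ℝ cp := by
      constructor
      · intro x y
        simp only [hcpdef, Prod.snd_add, Pi.add_apply, mul_add, Finset.sum_add_distrib]
      · intro r x
        simp only [hcpdef, Prod.smul_snd, Pi.smul_apply, smul_eq_mul, Finset.mul_sum]
        exact Finset.sum_congr rfl fun y _ => by ring
    have hcpL : ∀ (u : Fin d → ℝ) (t : Y → ℝ), (∀ y, L u y ≤ t y) →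
        elloss p (L u) ≤ cp (u, t) := by
      intro u t h
      exact Finset.sum_le_sum fun y _ => mul_le_mul_of_nonneg_left (h y) (hp0 y)
    have hcpeq : ∀ u : Fin d → ℝ, cp (u, L u) = elloss p (L u) := fun u => rfl
    set Fp : Set ((Fin d → ℝ) × (Y → ℝ)) :=
      {x | (∀ q, A q x ≤ bc q) ∧ ∀ x', (∀ q, A q x' ≤ bc q) → cp x ≤ cp x'} with hFpdef
    have MtoF : ∀ u, Minimizes p L u → (u, L u) ∈ Fp := by
      intro u hu
      refine ⟨(hPiff u (L u)).mpr fun y => le_refl _, fun x' hx' => ?_⟩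
      calc cp (u, L u) = elloss p (L u) := hcpeq u
        _ ≤ elloss p (L x'.1) := hu x'.1
        _ ≤ cp (x'.1, x'.2) := hcpL x'.1 x'.2 ((hPiff x'.1 x'.2).mp hx')
        _ = cp x' := rfl
    have FtoM : ∀ x ∈ Fp, Minimizes p L x.1 := by
      intro x hx u'
      have h1 : elloss p (L x.1) ≤ cp x :=
        le_trans (hcpL x.1 x.2 ((hPiff x.1 x.2).mp hx.1)) (le_of_eq rfl)
      have h2 : cp x ≤ cp (u', L u') :=
        hx.2 (u', L u') ((hPiff u' (L u')).mpr fun y => le_refl _)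
      calc elloss p (L x.1) ≤ cp x := h1
        _ ≤ cp (u', L u') := h2
        _ = elloss p (L u') := hcpeq u'
    have hΓ : {u | Minimizes p L u} = {u | ∃ t, (u, t) ∈ Fp} := by
      ext u
      exact ⟨fun h => ⟨L u, MtoF u h⟩, fun ⟨t, ht⟩ => FtoM (u, t) ht⟩
    have hface := face_lemma A hAlin bc cp hcplin Fp rfl ⟨(u0, L u0), MtoF u0 hu0⟩
    refine ⟨⟨{q | ∀ z ∈ Fp, A q z = bc q}, ?_⟩, ⟨u0, hu0⟩, ?_⟩
    · rw [hΓ]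
      ext u
      constructor
      · rintro ⟨t, ht⟩
        rw [hface] at ht
        exact ⟨t, ht.1, fun q hq => ht.2 q hq⟩
      · rintro ⟨t, h1, h2⟩
        refine ⟨t, ?_⟩
        rw [hface]
        exact ⟨h1, fun q hq => h2 q hq⟩
    · -- polyhedrality
      set v : ℝ := elloss p (L u0) with hvdef
      have hΓv : {u | Minimizes p L u} = {u | elloss p (L u) ≤ v} := by
        ext u
        exact ⟨fun h => h u0, fun h u' => le_trans h (hu0 u')⟩
      set e : Fin (Fintype.card (∀ y : Y, Fin (mm y + 1))) ≃ (∀ y : Y, Fin (mm y + 1)) :=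
        (Fintype.equivFin _).symm with hedef
      refine ⟨Fintype.card (∀ y : Y, Fin (mm y + 1)), fun k => Cp (e k),
        fun k => v - Dp (e k), ?_⟩
      rw [hΓv]
      ext u
      simp only [Set.mem_setOf_eq]
      rw [hrep u]
      constructor
      · intro h k
        have h1 : ∑ j, Cp (e k) j * u j + Dp (e k) ≤ maxAff Cp Dp u :=
          le_maxAff Cp Dp u (e k)
        linarith
      · intro h
        refine maxAff_le fun σ => ?_
        have h1 := h (e.symm σ)
        rw [Equiv.apply_symm_apply] at h1
        linarith
  constructor
  · apply Set.Finite.subset (Set.finite_range Φ)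
    rintro S ⟨p, hp, rfl⟩
    obtain ⟨I, hI⟩ := (main p hp).1
    exact ⟨I, hI.symm⟩
  · exact fun p hp => (main p hp).2
end

section
/- Let L : ℝ^d → ℝ^𝒴 be a polyhedral loss. Then its Bayes risk is polyhedral concave: there exists a finite set U' ⊆ ℝ^d such that risk_L(p) = min_{u∈U'} ⟨p, L(u)⟩ for all p ∈ Δ_𝒴; in particular −risk_L agrees on Δ_𝒴 with a pointwise maximum of finitely many linear functions on ℝ^𝒴. -/
def affF {d : ℕ} (c : Fin d → ℝ) (e : ℝ) (u : Fin d → ℝ) : ℝ := ∑ j, c j * u j + e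

lemma affF_line {d : ℕ} (c : Fin d → ℝ) (e : ℝ) (v w : Fin d → ℝ) (t : ℝ) :
    affF c e (fun j => v j + t * (w j - v j)) = affF c e v + t * (affF c e w - affF c e v) := by
  simp only [affF]
  have h1 : ∀ j ∈ Finset.univ, c j * (v j + t * (w j - v j))
      = c j * v j + t * (c j * w j) - t * (c j * v j) := by intro j _; ring
  rw [Finset.sum_congr rfl h1]
  rw [Finset.sum_sub_distrib, Finset.sum_add_distrib, ← Finset.mul_sum, ← Finset.mul_sum]
  ring

lemma key_lemma {Y : Type*} [Fintype Y] {d : ℕ} (I : Y → ℕ)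
    (c : (y : Y) → Fin (I y + 1) → Fin d → ℝ)
    (e : (y : Y) → Fin (I y + 1) → ℝ)
    (L : (Fin d → ℝ) → Y → ℝ)
    (hL : ∀ u y, L u y = Finset.univ.sup' Finset.univ_nonempty
        (fun i => affF (c y i) (e y i) u))
    (hL0 : ∀ u y, 0 ≤ L u y) :
    ∃ U' : Finset (Fin d → ℝ), U'.Nonempty ∧ ∀ p ∈ probSimplex Y, ∀ v : Fin d → ℝ,
      ∃ u' ∈ U', elloss p (L u') ≤ elloss p (L v) := by
  classical
  set f : (y : Y) → Fin (I y + 1) → (Fin d → ℝ) → ℝ :=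
    fun y i => affF (c y i) (e y i) with hfdef
  set K := (y : Y) × (Fin (I y + 1) × Fin (I y + 1)) with hK
  set tight : (Fin d → ℝ) → Finset K :=
    fun u => Finset.univ.filter (fun k => f k.1 k.2.1 u = f k.1 k.2.2 u) with htight
  set uS : Finset K → (Fin d → ℝ) := fun S =>
    if h : ∃ u, ∀ k ∈ S, f k.1 k.2.1 u = f k.1 k.2.2 u then h.choose else 0 with huS
  refine ⟨(Finset.univ : Finset (Finset K)).image uS,
    ⟨uS ∅, Finset.mem_image_of_mem _ (Finset.mem_univ _)⟩, ?_⟩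
  intro p hp
  set F : (Fin d → ℝ) → ℝ := fun u => elloss p (L u) with hF
  have hFnn : ∀ u, 0 ≤ F u := by
    intro u
    exact Finset.sum_nonneg fun y _ => mul_nonneg (hp.1 y) (hL0 u y)
  have hLsel : ∀ (u : Fin d → ℝ) (iy : (y : Y) → Fin (I y + 1)),
      (∀ y j, f y j u ≤ f y (iy y) u) → ∀ y, L u y = f y (iy y) u := by
    intro u iy hmax y
    rw [hL u y]
    exact le_antisymm (Finset.sup'_le _ _ fun j _ => hmax y j)
      (Finset.le_sup' (fun i => affF (c y i) (e y i) u) (Finset.mem_univ (iy y)))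
  -- main step
  have step : ∀ v : Fin d → ℝ,
      (∃ u' ∈ (Finset.univ : Finset (Finset K)).image uS, F u' ≤ F v) ∨
      (∃ v', F v' ≤ F v ∧ tight v ⊂ tight v') := by
    intro v
    have hex : ∃ u, ∀ k ∈ tight v, f k.1 k.2.1 u = f k.1 k.2.2 u :=
      ⟨v, fun k hk => (Finset.mem_filter.mp hk).2⟩
    set w := uS (tight v) with hwdef
    have hwspec : ∀ k ∈ tight v, f k.1 k.2.1 w = f k.1 k.2.2 w := by
      rw [hwdef, huS]
      simp only [dif_pos hex]
      exact hex.choose_spec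
    set α : (y : Y) → Fin (I y + 1) → ℝ := fun y i => f y i v with hα
    set β : (y : Y) → Fin (I y + 1) → ℝ := fun y i => f y i w - f y i v with hβ
    set line : ℝ → (Fin d → ℝ) := fun t j => v j + t * (w j - v j) with hlinedef
    have hline : ∀ (t : ℝ) y i, f y i (line t) = α y i + t * β y i := by
      intro t y i
      simp only [hα, hβ, hfdef, hlinedef]
      exact affF_line (c y i) (e y i) v w t
    have hsel : ∀ y : Y, ∃ i, ∀ j, α y j ≤ α y i := fun y => Finite.exists_max (α y)
    choose iy hiy using hsel
    set σ : ℝ := ∑ y, p y * β y (iy y) with hσdef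
    set Btw : ℝ → ℝ → Prop := fun t r => (0 < r ∧ r < t) ∨ (t < r ∧ r < 0) with hBtwdef
    set R : Finset ℝ := ((Finset.univ : Finset K).filter
        (fun k => k ∉ tight v ∧ β k.1 k.2.1 - β k.1 k.2.2 ≠ 0)).image
        (fun k => -(α k.1 k.2.1 - α k.1 k.2.2) / (β k.1 k.2.1 - β k.1 k.2.2)) with hR
    -- membership in tight v is the same as equality of α-values
    have htv : ∀ k : K, k ∈ tight v ↔ α k.1 k.2.1 = α k.1 k.2.2 := by
      intro k
      simp only [htight, Finset.mem_filter, Finset.mem_univ, true_and, hα]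
    -- tight pairs have equal β as well
    have hβeq : ∀ k : K, k ∈ tight v → β k.1 k.2.1 = β k.1 k.2.2 := by
      intro k hk
      have h1 := hwspec k hk
      have h2 := (htv k).mp hk
      simp only [hβ]
      simp only [hα] at h2
      rw [h1, h2]
    -- validity of the argmax selection in the root-free interval around 0
    have hvalid : ∀ t : ℝ, (∀ r ∈ R, ¬ Btw t r) →
        ∀ y j, α y j + t * β y j ≤ α y (iy y) + t * β y (iy y) := by
      intro t hno y j
      by_contra hlt
      push_neg at hlt
      set A := α y (iy y) - α y j with hA
      set B := β y (iy y) - β y j with hB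
      have hA0 : 0 ≤ A := sub_nonneg.mpr (hiy y j)
      have hDneg : A + t * B < 0 := by simp only [hA, hB]; nlinarith [hlt]
      rcases eq_or_lt_of_le hA0 with hA0' | hApos
      · have hmem : (⟨y, (iy y, j)⟩ : K) ∈ tight v := by
          rw [htv]
          simp only
          simp only [hA] at hA0'
          linarith
        have hBeq : B = 0 := by
          have := hβeq _ hmem
          simp only at this
          simp only [hB]
          linarith
        rw [hBeq] at hDneg
        simp at hDneg
        linarith
      · have hB0 : B ≠ 0 := by
          intro h
          rw [h] at hDneg
          simp at hDneg
          linarith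
        have hrR : -A / B ∈ R := by
          rw [hR]
          refine Finset.mem_image.mpr ⟨⟨y, (iy y, j)⟩, ?_, ?_⟩
          · refine Finset.mem_filter.mpr ⟨Finset.mem_univ _, ?_, ?_⟩
            · rw [htv]
              simp only
              intro hcontra
              simp only [hA] at hApos
              linarith
            · simp only
              exact fun h => hB0 (by simp only [hB]; linarith)
          · simp only [hA, hB]
        refine hno _ hrR ?_
        have hrB : (-A / B) * B = -A := by field_simp
        rcases lt_trichotomy t 0 with ht | ht | ht
        · right
          have hBpos : 0 < B := by nlinarith
          constructor
          · have h5 : t * B < (-A / B) * B := by rw [hrB]; linarith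
            exact lt_of_mul_lt_mul_right h5 hBpos.le
          · rw [div_neg_iff]
            right
            exact ⟨by linarith, hBpos⟩
        · rw [ht] at hDneg; simp at hDneg; linarith
        · left
          have hBneg : B < 0 := by nlinarith
          constructor
          · rw [div_pos_iff]
            right
            exact ⟨by linarith, hBneg⟩
          · have h5 : t * B < (-A / B) * B := by rw [hrB]; linarith
            exact lt_of_mul_lt_mul_of_nonpos_right h5 hBneg.le
    -- formula for F along the line
    have hFfor : ∀ t : ℝ, (∀ r ∈ R, ¬ Btw t r) → F (line t) = F v + t * σ := by
      intro t hno
      have hsel' := hvalid t hno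
      have hLt : ∀ y, L (line t) y = α y (iy y) + t * β y (iy y) := by
        intro y
        rw [hLsel (line t) iy (fun y j => by rw [hline, hline]; exact hsel' y j) y, hline]
      have hLv : ∀ y, L v y = α y (iy y) := by
        intro y
        exact hLsel v iy (fun y j => hiy y j) y
      simp only [hF, elloss]
      have h1 : ∀ y ∈ Finset.univ, p y * L (line t) y
          = p y * α y (iy y) + t * (p y * β y (iy y)) := by
        intro y _; rw [hLt y]; ring
      have h2 : ∀ y ∈ Finset.univ, p y * L v y = p y * α y (iy y) := by
        intro y _; rw [hLv y]
      rw [Finset.sum_congr rfl h1, Finset.sum_congr rfl h2, Finset.sum_add_distrib,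
        ← Finset.mul_sum, hσdef]
    -- the subset relation along the line
    have hsub : ∀ t : ℝ, tight v ⊆ tight (line t) := by
      intro t k hk
      refine Finset.mem_filter.mpr ⟨Finset.mem_univ _, ?_⟩
      rw [hline, hline, (htv k).mp hk, hβeq k hk]
    rcases le_or_gt σ 0 with hσ | hσ
    · -- move in the positive direction
      rcases (R.filter (fun r => 0 < r)).eq_empty_or_nonempty with hem | hne
      · left
        refine ⟨w, Finset.mem_image_of_mem _ (Finset.mem_univ _), ?_⟩
        have hno : ∀ r ∈ R, ¬ Btw 1 r := by
          intro r hr hb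
          rcases hb with ⟨h1, h2⟩ | ⟨h1, h2⟩
          · have : r ∈ R.filter (fun r => 0 < r) := Finset.mem_filter.mpr ⟨hr, h1⟩
            rw [hem] at this
            exact absurd this (Finset.notMem_empty r)
          · linarith
        have h1 : line 1 = w := by funext j; simp [hlinedef]
        have h2 := hFfor 1 hno
        rw [h1] at h2
        rw [h2]
        linarith
      · right
        set t := (R.filter (fun r => 0 < r)).min' hne with ht
        have htpos : 0 < t := (Finset.mem_filter.mp ((R.filter _).min'_mem hne)).2
        have htR : t ∈ R := (Finset.mem_filter.mp ((R.filter _).min'_mem hne)).1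
        have hno : ∀ r ∈ R, ¬ Btw t r := by
          intro r hr hb
          rcases hb with ⟨h1, h2⟩ | ⟨h1, h2⟩
          · have := (R.filter (fun r => 0 < r)).min'_le r (Finset.mem_filter.mpr ⟨hr, h1⟩)
            rw [← ht] at this
            linarith
          · linarith
        refine ⟨line t, ?_, ?_⟩
        · rw [hFfor t hno]
          nlinarith
        · refine (Finset.ssubset_iff_of_subset (hsub t)).mpr ?_
          obtain ⟨k, hkmem, hkr⟩ := Finset.mem_image.mp htR
          have hkS : k ∉ tight v := (Finset.mem_filter.mp hkmem).2.1
          have hkB : β k.1 k.2.1 - β k.1 k.2.2 ≠ 0 := (Finset.mem_filter.mp hkmem).2.2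
          refine ⟨k, ?_, hkS⟩
          refine Finset.mem_filter.mpr ⟨Finset.mem_univ _, ?_⟩
          rw [hline, hline]
          have hmul : t * (β k.1 k.2.1 - β k.1 k.2.2) = -(α k.1 k.2.1 - α k.1 k.2.2) := by
            rw [← hkr]
            field_simp
          linarith
    · -- move in the negative direction
      rcases (R.filter (fun r => r < 0)).eq_empty_or_nonempty with hem | hne
      · exfalso
        set t0 := -(F v + 1) / σ with ht0
        have ht0neg : t0 < 0 := by
          rw [ht0, div_neg_iff]
          right
          exact ⟨by nlinarith [hFnn v], hσ⟩
        have hno : ∀ r ∈ R, ¬ Btw t0 r := by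
          intro r hr hb
          rcases hb with ⟨h1, h2⟩ | ⟨h1, h2⟩
          · linarith
          · have : r ∈ R.filter (fun r => r < 0) := Finset.mem_filter.mpr ⟨hr, h2⟩
            rw [hem] at this
            exact absurd this (Finset.notMem_empty r)
        have h2 := hFfor t0 hno
        have h3 : t0 * σ = -(F v + 1) := by
          rw [ht0]
          field_simp
        rw [h3] at h2
        have := hFnn (line t0)
        linarith
      · right
        set t := (R.filter (fun r => r < 0)).max' hne with ht
        have htneg : t < 0 := (Finset.mem_filter.mp ((R.filter _).max'_mem hne)).2
        have htR : t ∈ R := (Finset.mem_filter.mp ((R.filter _).max'_mem hne)).1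
        have hno : ∀ r ∈ R, ¬ Btw t r := by
          intro r hr hb
          rcases hb with ⟨h1, h2⟩ | ⟨h1, h2⟩
          · linarith
          · have := (R.filter (fun r => r < 0)).le_max' r (Finset.mem_filter.mpr ⟨hr, h2⟩)
            rw [← ht] at this
            linarith
        refine ⟨line t, ?_, ?_⟩
        · rw [hFfor t hno]
          nlinarith
        · refine (Finset.ssubset_iff_of_subset (hsub t)).mpr ?_
          obtain ⟨k, hkmem, hkr⟩ := Finset.mem_image.mp htR
          have hkS : k ∉ tight v := (Finset.mem_filter.mp hkmem).2.1
          have hkB : β k.1 k.2.1 - β k.1 k.2.2 ≠ 0 := (Finset.mem_filter.mp hkmem).2.2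
          refine ⟨k, ?_, hkS⟩
          refine Finset.mem_filter.mpr ⟨Finset.mem_univ _, ?_⟩
          rw [hline, hline]
          have hmul : t * (β k.1 k.2.1 - β k.1 k.2.2) = -(α k.1 k.2.1 - α k.1 k.2.2) := by
            rw [← hkr]
            field_simp
          linarith
  -- descent by induction
  have descent : ∀ n : ℕ, ∀ v : Fin d → ℝ, Fintype.card K - (tight v).card ≤ n →
      ∃ u' ∈ (Finset.univ : Finset (Finset K)).image uS, F u' ≤ F v := by
    intro n
    induction n with
    | zero =>
      intro v hv
      rcases step v with h | ⟨v', hle, hssub⟩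
      · exact h
      · exfalso
        have h1 := Finset.card_lt_card hssub
        have h2 : (tight v').card ≤ Fintype.card K := by
          rw [← Finset.card_univ]; exact Finset.card_le_card (Finset.subset_univ _)
        omega
    | succ n ih =>
      intro v hv
      rcases step v with h | ⟨v', hle, hssub⟩
      · exact h
      · have h1 := Finset.card_lt_card hssub
        have h2 : (tight v').card ≤ Fintype.card K := by
          rw [← Finset.card_univ]; exact Finset.card_le_card (Finset.subset_univ _)
        obtain ⟨u', hu', hle'⟩ := ih v' (by omega)
        exact ⟨u', hu', hle'.trans hle⟩
  intro v
  exact descent (Fintype.card K) v (Nat.sub_le _ _)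


/-- A polyhedral loss has polyhedral (concave) Bayes risk: the Bayes risk is
the minimum of expected loss over some finite set `U'` of reports, and in particular the
negative Bayes risk agrees on the simplex with a pointwise maximum of finitely many linear
functions on `ℝ^𝒴`. -/
theorem polyhedral_loss_polyhedral_bayesRisk
    {Y : Type*} [Fintype Y] {d : ℕ}
    (L : (Fin d → ℝ) → Y → ℝ) (hL0 : ∀ u y, 0 ≤ L u y)
    (hpoly : ∀ y, IsPolyhedralFn (fun u => L u y)) :
    (∃ U' : Finset (Fin d → ℝ), ∃ hne : U'.Nonempty, ∀ p ∈ probSimplex Y,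
        bayesRisk p L = U'.inf' hne (fun u => elloss p (L u))) ∧
    (∃ (m : ℕ) (a : Fin (m + 1) → Y → ℝ), ∀ p ∈ probSimplex Y,
        -bayesRisk p L = Finset.univ.sup' Finset.univ_nonempty (fun i => ∑ y, a i y * p y)) := by
  classical
  choose m a b hab using hpoly
  obtain ⟨U', hne', hkey⟩ := key_lemma m a b L (fun u y => hab y u) hL0
  have hmain : ∀ p ∈ probSimplex Y, bayesRisk p L = U'.inf' hne' (fun u => elloss p (L u)) := by
    intro p hp
    have hbdd : BddBelow (Set.range fun u => elloss p (L u)) := by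
      refine ⟨0, ?_⟩
      rintro x ⟨u, rfl⟩
      exact Finset.sum_nonneg fun y _ => mul_nonneg (hp.1 y) (hL0 u y)
    apply le_antisymm
    · obtain ⟨u0, hu0, h0⟩ := Finset.exists_mem_eq_inf' hne' (fun u => elloss p (L u))
      rw [h0]
      exact csInf_le hbdd ⟨u0, rfl⟩
    · refine le_csInf ⟨elloss p (L (fun _ => 0)), ⟨fun _ => 0, rfl⟩⟩ ?_
      rintro x ⟨v, rfl⟩
      obtain ⟨u', hu', hle⟩ := hkey p hp v
      exact (Finset.inf'_le _ hu').trans hle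
  refine ⟨⟨U', hne', hmain⟩, ?_⟩
  set m' := U'.card - 1 with hm'
  have hcard : U'.card = m' + 1 := (Nat.succ_pred_eq_of_pos (Finset.card_pos.mpr hne')).symm
  set g : Fin (m' + 1) → (Fin d → ℝ) := fun i => (U'.equivFin.symm (Fin.cast hcard.symm i)).1 with hg
  have hgmem : ∀ i, g i ∈ U' := fun i => (U'.equivFin.symm _).2
  have hgsurj : ∀ u ∈ U', ∃ i, g i = u := by
    intro u hu
    refine ⟨Fin.cast hcard (U'.equivFin ⟨u, hu⟩), ?_⟩
    simp [hg]
  refine ⟨m', fun i y => -(L (g i) y), ?_⟩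
  intro p hp
  rw [hmain p hp]
  have hsum : ∀ i : Fin (m' + 1), ∑ y, (-(L (g i) y)) * p y = -(elloss p (L (g i))) := by
    intro i
    simp only [elloss]
    rw [← Finset.sum_neg_distrib]
    exact Finset.sum_congr rfl fun y _ => by ring
  apply le_antisymm
  · obtain ⟨u0, hu0, h0⟩ := Finset.exists_mem_eq_inf' hne' (fun u => elloss p (L u))
    obtain ⟨i, rfl⟩ := hgsurj u0 hu0
    rw [h0]
    calc -(elloss p (L (g i))) = ∑ y, (-(L (g i) y)) * p y := (hsum i).symm
      _ ≤ _ := Finset.le_sup' (fun i => ∑ y, (fun i y => -(L (g i) y)) i y * p y) (Finset.mem_univ i)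
  · refine Finset.sup'_le _ _ fun i _ => ?_
    rw [hsum i]
    exact neg_le_neg (Finset.inf'_le _ (hgmem i))
end

section
/- Let L : ℝ^d → ℝ^𝒴 be a loss that embeds a discrete loss ℓ : ℛ → ℝ^𝒴 via the injection φ : ℛ → ℝ^d, and write Γ(p) = argmin_{u∈ℝ^d} ⟨p, L(u)⟩. Let P ⊆ Δ_𝒴 be any set of distributions such that ⋂_{p∈P} Γ(p) ≠ ∅. Then there exists r ∈ ℛ such that φ(r) ∈ Γ(p) for every p ∈ P. -/
/-- If `L` embeds `ℓ` via `φ` and `P ⊆ Δ_𝒴` is a set of distributions whose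
sets of minimizers `Γ(p)` have a common point, then some embedded point `φ r` lies in `Γ(p)`
for every `p ∈ P`. -/
theorem embedded_point_in_common_minimizers
    {Y R : Type*} [Fintype Y] [Fintype R] [Nonempty R] {d : ℕ}
    (L : (Fin d → ℝ) → Y → ℝ) (hL0 : ∀ u y, 0 ≤ L u y)
    (ℓ : R → Y → ℝ) (hℓ0 : ∀ r y, 0 ≤ ℓ r y)
    (φ : R → (Fin d → ℝ)) (hφ : Function.Injective φ)
    (hmatch : ∀ r, L (φ r) = ℓ r)
    (hiff : ∀ p ∈ probSimplex Y, ∀ r, Minimizes p ℓ r ↔ Minimizes p L (φ r))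
    (P : Set (Y → ℝ)) (hP : P ⊆ probSimplex Y)
    (hint : (⋂ p ∈ P, {u | Minimizes p L u}).Nonempty) :
    ∃ r : R, ∀ p ∈ P, Minimizes p L (φ r) := by
  by_contra hcon
  push_neg at hcon
  choose q hqP hqbad using hcon
  obtain ⟨u, hu⟩ := hint
  simp only [Set.mem_iInter, Set.mem_setOf_eq] at hu
  set n : ℝ := (Fintype.card R : ℝ) with hn
  have hnpos : (0:ℝ) < n := by
    rw [hn]; exact_mod_cast Fintype.card_pos
  set pb : Y → ℝ := fun y => (∑ r, q r y) / n with hpbdef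
  have key : ∀ v : Y → ℝ, elloss pb v = (∑ r, elloss (q r) v) / n := by
    intro v
    simp only [elloss, hpbdef, div_mul_eq_mul_div]
    rw [← Finset.sum_div]
    congr 1
    simp only [Finset.sum_mul]
    rw [Finset.sum_comm]
  have hpb : pb ∈ probSimplex Y := by
    constructor
    · intro y
      apply div_nonneg _ hnpos.le
      exact Finset.sum_nonneg fun r _ => (hP (hqP r)).1 y
    · simp only [hpbdef]
      rw [← Finset.sum_div, Finset.sum_comm]
      have : ∀ r : R, ∑ y, q r y = 1 := fun r => (hP (hqP r)).2
      simp only [this, Finset.sum_const, nsmul_eq_mul, mul_one]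
      rw [Finset.card_univ]
      exact div_self hnpos.ne'
  have humin : Minimizes pb L u := by
    intro u'
    rw [key, key]
    apply div_le_div_of_nonneg_right _ hnpos.le
    exact Finset.sum_le_sum fun r _ => hu (q r) (hqP r) u'
  obtain ⟨rs, _, hrmin⟩ := Finset.exists_min_image Finset.univ
    (fun r => elloss pb (ℓ r)) ⟨Classical.arbitrary R, Finset.mem_univ _⟩
  have hℓmin : Minimizes pb ℓ rs := fun r' => hrmin r' (Finset.mem_univ r')
  have hLmin : Minimizes pb L (φ rs) := (hiff pb hpb rs).mp hℓmin
  have heq : elloss pb (L (φ rs)) = elloss pb (L u) :=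
    le_antisymm (hLmin u) (humin (φ rs))
  have hsumeq : ∑ r, elloss (q r) (L u) = ∑ r, elloss (q r) (L (φ rs)) := by
    have h2 := heq
    have hne : n ≠ 0 := hnpos.ne'
    rw [key, key] at h2
    field_simp at h2
    linarith
  have hle : ∀ r ∈ Finset.univ, elloss (q r) (L u) ≤ elloss (q r) (L (φ rs)) :=
    fun r _ => hu (q r) (hqP r) (φ rs)
  have heach := (Finset.sum_eq_sum_iff_of_le hle).mp hsumeq
  have heqrs : elloss (q rs) (L u) = elloss (q rs) (L (φ rs)) :=
    heach rs (Finset.mem_univ rs)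
  exact hqbad rs fun u' => heqrs ▸ hu (q rs) (hqP rs) u'
end

section
/- Let D be a nonempty closed convex polyhedron in ℝ^d and let ε > 0. Then there exists an open convex set D', equal to an intersection of finitely many open halfspaces {x : ⟨a, x⟩ < b}, such that D ⊆ D' ⊆ B(D, ε). -/
/-- A (closed convex) polyhedron in Euclidean space `ℝ^d`: an intersection of finitely many
closed halfspaces `{x : ⟨a, x⟩ ≤ b}`. -/
def IsEuclideanPolyhedron {d : ℕ} (S : Set (EuclideanSpace ℝ (Fin d))) : Prop :=
  ∃ (m : ℕ) (a : Fin m → EuclideanSpace ℝ (Fin d)) (b : Fin m → ℝ),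
    S = {x | ∀ i, ∑ j, a i j * x j ≤ b i}

open Finset Set Filter Topology
open scoped RealInnerProductSpace

/-! Relaxing each constraint of `D = {x | ⟪a i, x⟫ ≤ b i}` by a small `δ` works by Hoffman's error
bound. If `p` is the point of `D` nearest to `x`, then `x - p` lies in the normal cone of `D` at
`p`, which by Farkas' lemma is the cone spanned by the normals `a i` of the constraints active at
`p`, and by Carathéodory's theorem the cone spanned by a linearly independent subfamily of them.
The coefficients `cᵢ` over such a subfamily are at most `K ‖x - p‖`, so
`‖x - p‖² = ∑ cᵢ ⟪a i, x - p⟫ ≤ δ ∑ cᵢ ≤ K δ ‖x - p‖`. Farkas' lemma needs the cone to be closed,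
which again follows from Carathéodory's theorem. -/

namespace PointedCone

variable {ι V : Type*} [AddCommGroup V] [Module ℝ V] {v : ι → V}

theorem mem_hull_image_finset_iff {s : Finset ι} {x : V} :
    x ∈ hull ℝ (v '' s) ↔ ∃ c : ι → ℝ, (∀ i ∈ s, 0 ≤ c i) ∧ ∑ i ∈ s, c i • v i = x := by
  rw [hull, Submodule.mem_span_image_finset_iff_exists_fun']
  constructor
  · rintro ⟨c, rfl⟩
    exact ⟨fun i => c i, fun i _ => (c i).2, rfl⟩
  · rintro ⟨c, hc, rfl⟩
    refine ⟨fun i => ⟨max (c i) 0, le_max_right _ _⟩, sum_congr rfl fun i hi => ?_⟩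
    rw [Nonneg.mk_smul, max_eq_left (hc i hi)]

/-- One step of Carathéodory's theorem for cones: a linear dependence among the generators lets
one shift the coefficients along it until one of them vanishes. -/
theorem exists_erase_of_not_linearIndepOn [DecidableEq ι] {A : Finset ι}
    (hA : ¬LinearIndepOn ℝ v A) {c : ι → ℝ} (hc : ∀ i ∈ A, 0 ≤ c i) :
    ∃ k ∈ A, ∃ c' : ι → ℝ, (∀ i ∈ A.erase k, 0 ≤ c' i) ∧
      ∑ i ∈ A.erase k, c' i • v i = ∑ i ∈ A, c i • v i := by
  obtain ⟨g, hg, j, hjA, hgj⟩ := not_linearIndepOn_finset_iff.1 hA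
  wlog hgj_pos : 0 < g j generalizing g
  · refine this (-g) (by simp [hg]) (neg_ne_zero.2 hgj) ?_
    simpa using lt_of_le_of_ne (not_lt.1 hgj_pos) hgj
  obtain ⟨k, hk, hk_min⟩ := exists_min_image (A.filter (0 < g ·)) (fun i => c i / g i)
    ⟨j, mem_filter.2 ⟨hjA, hgj_pos⟩⟩
  obtain ⟨hkA, hgk⟩ := mem_filter.1 hk
  set t := c k / g k
  have ht : 0 ≤ t := div_nonneg (hc k hkA) hgk.le
  refine ⟨k, hkA, fun i => c i - t * g i, fun i hi => ?_, ?_⟩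
  · have hiA := mem_of_mem_erase hi
    rcases lt_or_ge 0 (g i) with hgi | hgi
    · have := hk_min i (mem_filter.2 ⟨hiA, hgi⟩)
      rw [le_div_iff₀ hgi] at this
      linarith
    · nlinarith [hc i hiA]
  · rw [sum_erase _ (by simp [t, div_mul_cancel₀ _ hgk.ne'])]
    simp only [sub_smul, sum_sub_distrib, mul_smul, ← smul_sum, hg, smul_zero, sub_zero]

theorem exists_linearIndepOn_of_mem_hull_image {A : Finset ι} {x : V}
    (hx : x ∈ hull ℝ (v '' A)) :
    ∃ s ⊆ A, LinearIndepOn ℝ v s ∧ x ∈ hull ℝ (v '' s) := by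
  classical
  induction A using Finset.strongInduction with
  | H A ih =>
    by_cases hA : LinearIndepOn ℝ v A
    · exact ⟨A, subset_rfl, hA, hx⟩
    obtain ⟨c, hc, rfl⟩ := mem_hull_image_finset_iff.1 hx
    obtain ⟨k, hkA, c', hc', hsum⟩ := exists_erase_of_not_linearIndepOn hA hc
    obtain ⟨s, hs, hli, hxs⟩ :=
      ih (A.erase k) (erase_ssubset hkA) (mem_hull_image_finset_iff.2 ⟨c', hc', hsum⟩)
    exact ⟨s, hs.trans (erase_subset k A), hli, hxs⟩

end PointedCone

section Normed

variable {ι E : Type*} [NormedAddCommGroup E] [NormedSpace ℝ E] {v : ι → E}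

namespace LinearIndepOn

theorem isClosed_hull_image {s : Finset ι} (hs : LinearIndepOn ℝ v s) :
    IsClosed (PointedCone.hull ℝ (v '' s) : Set E) := by
  set T := Fintype.linearCombination ℝ (fun i : s => v i)
  have hT : LinearMap.ker T = ⊥ :=
    LinearMap.ker_eq_bot.2 (linearIndependent_iff_injective_fintypeLinearCombination.1 hs)
  have hhull : (PointedCone.hull ℝ (v '' s) : Set E) = T '' Ici 0 := by
    ext x
    rw [SetLike.mem_coe, PointedCone.mem_hull_image_finset_iff]
    constructor
    · rintro ⟨c, hc, rfl⟩
      refine ⟨fun i => c i, fun i => hc i i.2, ?_⟩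
      simp only [T, Fintype.linearCombination_apply]
      exact sum_coe_sort s (fun i => c i • v i)
    · rintro ⟨c, hc, rfl⟩
      classical
      refine ⟨fun i => if h : i ∈ s then c ⟨i, h⟩ else 0,
        fun i hi => by simpa [hi] using hc ⟨i, hi⟩, ?_⟩
      simp only [T, Fintype.linearCombination_apply, ← sum_coe_sort s]
      simp
  rw [hhull]
  exact (LinearMap.isClosedEmbedding_of_injective hT).isClosedMap _ isClosed_Ici

theorem exists_sum_abs_le_mul_norm {s : Finset ι} (hs : LinearIndepOn ℝ v s) :
    ∃ K, 0 ≤ K ∧ ∀ c : ι → ℝ, ∑ i ∈ s, |c i| ≤ K * ‖∑ i ∈ s, c i • v i‖ := by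
  set T := Fintype.linearCombination ℝ (fun i : s => v i)
  obtain ⟨K, -, hK⟩ := (LinearMap.injective_iff_antilipschitz T).1
    (linearIndependent_iff_injective_fintypeLinearCombination.1 hs)
  refine ⟨s.card * K, by positivity, fun c => ?_⟩
  calc ∑ i ∈ s, |c i| = ∑ i : s, ‖c i‖ := (sum_coe_sort s _).symm
    _ ≤ s.card * ‖fun i : s => c i‖ := by simpa using Pi.sum_norm_apply_le_norm (fun i : s => c i)
    _ ≤ s.card * (K * ‖T fun i : s => c i‖) := by gcongr; exact hK.le_mul_norm (map_zero T) _
    _ = s.card * K * ‖∑ i ∈ s, c i • v i‖ := by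
      rw [Fintype.linearCombination_apply, sum_coe_sort s fun i => c i • v i, mul_assoc]

end LinearIndepOn

theorem PointedCone.isClosed_hull_image_finset (v : ι → E) (A : Finset ι) :
    IsClosed (PointedCone.hull ℝ (v '' A) : Set E) := by
  have hunion : (PointedCone.hull ℝ (v '' A) : Set E) =
      ⋃ s ∈ {s : Finset ι | s ⊆ A ∧ LinearIndepOn ℝ v s}, PointedCone.hull ℝ (v '' s) := by
    ext x
    simp only [SetLike.mem_coe, mem_iUnion, mem_ofPred_eq, exists_prop]
    constructor
    · rintro hx
      obtain ⟨s, hsA, hs, hxs⟩ := PointedCone.exists_linearIndepOn_of_mem_hull_image hx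
      exact ⟨s, ⟨hsA, hs⟩, hxs⟩
    · rintro ⟨s, ⟨hsA, -⟩, hxs⟩
      exact Submodule.span_mono (image_mono (coe_subset.2 hsA)) hxs
  rw [hunion]
  exact (A.powerset.finite_toSet.subset fun s hs => mem_powerset.2 hs.1).isClosed_biUnion
    fun s hs => hs.2.isClosed_hull_image

end Normed

section Polyhedron

variable {ι E : Type*} [NormedAddCommGroup E] [InnerProductSpace ℝ E]

theorem isClosed_setOf_forall_inner_le (a : ι → E) (b : ι → ℝ) :
    IsClosed {x : E | ∀ i, ⟪a i, x⟫ ≤ b i} := by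
  simp only [ofPred_forall]
  exact isClosed_iInter fun i => isClosed_le (by fun_prop) continuous_const

theorem convex_setOf_forall_inner_le (a : ι → E) (b : ι → ℝ) :
    Convex ℝ {x : E | ∀ i, ⟪a i, x⟫ ≤ b i} := by
  simp only [ofPred_forall]
  exact convex_iInter fun i => convex_halfSpace_le (innerₛₗ ℝ (a i)).isLinear (b i)

theorem mem_hull_active_of_forall_inner_sub_nonpos [Fintype ι] [CompleteSpace E] {a : ι → E}
    {b : ι → ℝ} {p u : E} (hp : ∀ i, ⟪a i, p⟫ ≤ b i)
    (hu : ∀ w, (∀ i, ⟪a i, w⟫ ≤ b i) → ⟪u, w - p⟫ ≤ 0) :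
    u ∈ PointedCone.hull ℝ (a '' ↑({i | ⟪a i, p⟫ = b i} : Finset ι)) := by
  by_contra hnot
  obtain ⟨y, hy, huy⟩ := ProperCone.hyperplane_separation'
    ⟨_, PointedCone.isClosed_hull_image_finset a {i | ⟪a i, p⟫ = b i}⟩ hnot
  have hfeasible : ∀ᶠ t in 𝓝[>] (0 : ℝ), ∀ i, ⟪a i, p - t • y⟫ ≤ b i := by
    refine eventually_all.2 fun i => ?_
    rcases (hp i).lt_or_eq with hlt | heq
    · have hcont : Continuous fun t : ℝ => ⟪a i, p - t • y⟫ := by fun_prop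
      refine nhdsWithin_le_nhds ?_
      filter_upwards [hcont.continuousAt.eventually_lt continuousAt_const (by simpa using hlt)]
        with t ht using ht.le
    · have hay : 0 ≤ ⟪a i, y⟫ := hy _ (PointedCone.subset_hull (mem_image_of_mem a (by simpa)))
      filter_upwards [self_mem_nhdsWithin] with t (ht : 0 < t)
      rw [inner_sub_right, real_inner_smul_right, heq]
      nlinarith
  obtain ⟨t, hfeas, ht⟩ := (hfeasible.and self_mem_nhdsWithin).exists
  have hdescent := hu _ hfeas
  rw [sub_sub_cancel_left, inner_neg_right, real_inner_smul_right] at hdescent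
  nlinarith

theorem exists_dist_le_mul_of_forall_inner_le_add [Fintype ι] [CompleteSpace E] (a : ι → E)
    (b : ι → ℝ) (hne : {x : E | ∀ i, ⟪a i, x⟫ ≤ b i}.Nonempty) :
    ∃ K, 0 ≤ K ∧ ∀ δ, 0 ≤ δ → ∀ x, (∀ i, ⟪a i, x⟫ ≤ b i + δ) →
      ∃ p, (∀ i, ⟪a i, p⟫ ≤ b i) ∧ dist x p ≤ K * δ := by
  classical
  choose K hK0 hK using fun s : {s : Finset ι // LinearIndepOn ℝ a s} =>
    s.2.exists_sum_abs_le_mul_norm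
  obtain ⟨C, hC0, hKC⟩ : ∃ C, 0 ≤ C ∧ ∀ s, K s ≤ C :=
    ⟨∑ s, K s, sum_nonneg fun s _ => hK0 s,
      fun s => single_le_sum (fun s _ => hK0 s) (mem_univ s)⟩
  refine ⟨C, hC0, fun δ hδ x hx => ?_⟩
  have hconv := convex_setOf_forall_inner_le a b
  obtain ⟨p, hp, hp_min⟩ := exists_norm_eq_iInf_of_complete_convex hne
    (isClosed_setOf_forall_inner_le a b).isComplete hconv x
  have hnormal := (norm_eq_iInf_iff_real_inner_le_zero hconv hp).1 hp_min
  obtain ⟨s, hs_act, hs, hus⟩ := PointedCone.exists_linearIndepOn_of_mem_hull_image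
    (mem_hull_active_of_forall_inner_sub_nonpos hp hnormal)
  obtain ⟨c, hc, hcu⟩ := PointedCone.mem_hull_image_finset_iff.1 hus
  have hviol : ∀ i ∈ s, ⟪a i, x - p⟫ ≤ δ := fun i hi => by
    have hpi : ⟪a i, p⟫ = b i := (mem_filter.1 (hs_act hi)).2
    rw [inner_sub_right, hpi]
    linarith [hx i]
  have hsq : ‖x - p‖ ^ 2 ≤ δ * ∑ i ∈ s, c i := by
    calc ‖x - p‖ ^ 2 = ∑ i ∈ s, c i * ⟪a i, x - p⟫ := by
          rw [← real_inner_self_eq_norm_sq]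
          nth_rw 1 [← hcu]
          simp only [sum_inner, real_inner_smul_left]
      _ ≤ ∑ i ∈ s, c i * δ :=
          sum_le_sum fun i hi => mul_le_mul_of_nonneg_left (hviol i hi) (hc i hi)
      _ = δ * ∑ i ∈ s, c i := by rw [← sum_mul, mul_comm]
  have hcoef : ∑ i ∈ s, c i ≤ C * ‖x - p‖ := by
    calc ∑ i ∈ s, c i ≤ ∑ i ∈ s, |c i| := sum_le_sum fun i _ => le_abs_self _
      _ ≤ K ⟨s, hs⟩ * ‖x - p‖ := hcu ▸ hK ⟨s, hs⟩ c
      _ ≤ C * ‖x - p‖ := by gcongr; exact hKC _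
  refine ⟨p, hp, ?_⟩
  rw [dist_eq_norm]
  nlinarith [norm_nonneg (x - p), mul_nonneg hC0 hδ]

end Polyhedron

theorem EuclideanSpace.sum_mul_eq_inner {d : ℕ} (v x : EuclideanSpace ℝ (Fin d)) :
    ∑ j, v j * x j = ⟪v, x⟫ := by
  simp [PiLp.inner_apply, mul_comm]

/-- Any nonempty closed convex polyhedron `D` can be enclosed in an open set
`D'` that is an intersection of finitely many open halfspaces, with `D ⊆ D' ⊆ B(D, ε)`. -/
theorem polyhedron_open_halfspace_enclosure
    {d : ℕ} (D : Set (EuclideanSpace ℝ (Fin d))) (hne : D.Nonempty)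
    (hD : IsEuclideanPolyhedron D) (ε : ℝ) (hε : 0 < ε) :
    ∃ (m : ℕ) (a : Fin m → EuclideanSpace ℝ (Fin d)) (b : Fin m → ℝ),
      D ⊆ {x | ∀ i, ∑ j, a i j * x j < b i} ∧
      {x | ∀ i, ∑ j, a i j * x j < b i} ⊆ Metric.thickening ε D := by
  obtain ⟨m, a, b, rfl⟩ := hD
  simp only [EuclideanSpace.sum_mul_eq_inner] at hne ⊢
  obtain ⟨K, hK, hbound⟩ := exists_dist_le_mul_of_forall_inner_le_add a b hne
  have hδ : 0 < ε / (K + 1) := by positivity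
  refine ⟨m, a, fun i => b i + ε / (K + 1), fun x hx i => by linarith [hx i], fun x hx => ?_⟩
  obtain ⟨p, hp, hdist⟩ := hbound _ hδ.le x fun i => (hx i).le
  refine Metric.mem_thickening_iff.2 ⟨p, hp, hdist.trans_lt ?_⟩
  rw [mul_div_assoc', div_lt_iff₀ (by positivity)]
  nlinarith
end

section
/- Let U_1, …, U_m be closed convex polyhedra in ℝ^d with ⋂_{j=1}^m U_j ≠ ∅. Then for every δ > 0 there exists ε > 0 such that ⋂_{j=1}^m B(U_j, ε) ⊆ B(⋂_{j=1}^m U_j, δ). -/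
/-!
Writing the intersection as one system of halfspaces `⟪aᵢ, x⟫ ≤ bᵢ`, it suffices that the
relaxed system `⟪aᵢ, x⟫ ≤ bᵢ + ε` lies in the `δ`-thickening of the exact one for small `ε`.
This goes by strong induction on the set of constraints. Points violating it for `ε = 1/(n+1)`
may be taken orthogonal to the lineality space. They cannot stay bounded, since a limit point
would lie in the polyhedron; so, after normalizing, they tend to a unit direction `w` with all
`⟪aᵢ, w⟫ ≤ 0`, and with some `⟪aᵢ, w⟫ < 0` because `w` is orthogonal to the lineality space.
Far along the sequence the constraints with `⟪aᵢ, w⟫ < 0` hold with room to spare, and the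
induction hypothesis for the remaining ones yields a point of the polyhedron within `δ`.
-/

open Filter Metric Set
open scoped RealInnerProductSpace Topology

section Polyhedron

variable {E ι : Type*} [NormedAddCommGroup E] [InnerProductSpace ℝ E]

def polyhedron (s : Finset ι) (a : ι → E) (b : ι → ℝ) : Set E :=
  {x | ∀ i ∈ s, ⟪a i, x⟫ ≤ b i}

noncomputable def lineality (s : Finset ι) (a : ι → E) : Submodule ℝ E :=
  ⨅ i ∈ s, (ℝ ∙ a i)ᗮ

variable {s t : Finset ι} {a : ι → E} {b b' : ι → ℝ} {x y v w : E} {δ : ℝ}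

@[simp]
lemma mem_polyhedron : x ∈ polyhedron s a b ↔ ∀ i ∈ s, ⟪a i, x⟫ ≤ b i := Iff.rfl

lemma polyhedron_subset_polyhedron (hts : t ⊆ s) (hb : ∀ i ∈ t, b i ≤ b' i) :
    polyhedron s a b ⊆ polyhedron t a b' :=
  fun _ hx i hi => (hx i (hts hi)).trans (hb i hi)

lemma mem_polyhedron_of_tendsto {α : Type*} {l : Filter α} [l.NeBot] {x : α → E} {ε : α → ℝ}
    (hx : Tendsto x l (𝓝 y)) (hε : Tendsto ε l (𝓝 0))
    (h : ∀ᶠ n in l, x n ∈ polyhedron s a (b · + ε n)) : y ∈ polyhedron s a b := fun i hi =>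
  le_of_tendsto_of_tendsto (((continuous_const.inner continuous_id).tendsto y).comp hx)
    (by simpa using hε.const_add (b i)) (h.mono fun _ hn => hn i hi)

lemma inner_le_add_of_dist_le {r : ℝ} (e : E) (h : dist x y ≤ r) : ⟪e, x⟫ ≤ ⟪e, y⟫ + ‖e‖ * r :=
  calc ⟪e, x⟫ = ⟪e, y⟫ + ⟪e, x - y⟫ := by rw [inner_sub_right]; ring
    _ ≤ ⟪e, y⟫ + ‖e‖ * r := by
      gcongr
      exact (real_inner_le_norm _ _).trans (by gcongr; rwa [← dist_eq_norm])

lemma thickening_polyhedron_subset {r : ℝ} :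
    thickening r (polyhedron s a b) ⊆ polyhedron s a (fun i => b i + ‖a i‖ * r) := by
  intro x hx i hi
  obtain ⟨z, hz, hxz⟩ := mem_thickening_iff.1 hx
  exact (inner_le_add_of_dist_le (a i) hxz.le).trans (by simpa using hz i hi)

lemma mem_thickening_polyhedron_of_margin (hy : y ∈ thickening δ (polyhedron t a b))
    (hmargin : ∀ i ∈ s, i ∉ t → ⟪a i, y⟫ + ‖a i‖ * δ ≤ b i) :
    y ∈ thickening δ (polyhedron s a b) := by
  obtain ⟨z, hz, hyz⟩ := mem_thickening_iff.1 hy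
  refine mem_thickening_iff.2 ⟨z, fun i hi => ?_, hyz⟩
  by_cases hit : i ∈ t
  · exact hz i hit
  · rw [dist_comm] at hyz
    exact (inner_le_add_of_dist_le (a i) hyz.le).trans (hmargin i hi hit)

lemma mem_lineality : v ∈ lineality s a ↔ ∀ i ∈ s, ⟪a i, v⟫ = 0 := by
  simp [lineality, Submodule.mem_orthogonal_singleton_iff_inner_right]

lemma add_mem_polyhedron_iff (hv : v ∈ lineality s a) :
    x + v ∈ polyhedron s a b ↔ x ∈ polyhedron s a b := by
  have := mem_lineality.1 hv
  refine forall₂_congr fun i hi => ?_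
  rw [inner_add_right, this i hi, add_zero]

lemma add_mem_thickening_polyhedron (hv : v ∈ lineality s a)
    (hx : x ∈ thickening δ (polyhedron s a b)) : x + v ∈ thickening δ (polyhedron s a b) := by
  obtain ⟨z, hz, hxz⟩ := mem_thickening_iff.1 hx
  exact mem_thickening_iff.2 ⟨z + v, (add_mem_polyhedron_iff hv).2 hz, by rwa [dist_add_right]⟩

lemma exists_inner_ne_zero_of_mem_orthogonal_lineality (hw : w ∈ (lineality s a)ᗮ)
    (hw₀ : w ≠ 0) : ∃ i ∈ s, ⟪a i, w⟫ ≠ 0 := by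
  by_contra! h
  exact hw₀ (inner_self_eq_zero.1 (Submodule.inner_right_of_mem_orthogonal (mem_lineality.2 h) hw))

end Polyhedron

lemma exists_subseq_tendsto_inv_norm_smul {E : Type*} [NormedAddCommGroup E] [NormedSpace ℝ E]
    [ProperSpace E] {y : ℕ → E} (hy : Tendsto (‖y ·‖) atTop atTop) :
    ∃ w, ‖w‖ = 1 ∧ ∃ φ : ℕ → ℕ, StrictMono φ ∧
      Tendsto (fun n => ‖y (φ n)‖⁻¹ • y (φ n)) atTop (𝓝 w) := by
  obtain ⟨N, hN⟩ := eventually_atTop.1 (hy.eventually_ge_atTop 1)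
  have hsphere : ∀ n, ‖y (n + N)‖⁻¹ • y (n + N) ∈ sphere (0 : E) 1 := fun n => by
    rw [mem_sphere_zero_iff_norm]
    exact norm_smul_inv_norm (norm_pos_iff.1 (one_pos.trans_le (hN _ (Nat.le_add_left N n))))
  obtain ⟨w, hw, φ, hφ, hlim⟩ := (isCompact_sphere (0 : E) 1).tendsto_subseq hsphere
  exact ⟨w, mem_sphere_zero_iff_norm.1 hw, (· + N) ∘ φ, (strictMono_id.add_const N).comp hφ, hlim⟩

section Asymptotic

variable {E : Type*} [NormedAddCommGroup E] [InnerProductSpace ℝ E]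
variable {α : Type*} {l : Filter α} {y : α → E} {a w : E}

lemma tendsto_inner_atBot_of_inner_neg (hy : Tendsto (‖y ·‖) l atTop)
    (hu : Tendsto (fun n => ‖y n‖⁻¹ • y n) l (𝓝 w)) (ha : ⟪a, w⟫ < 0) :
    Tendsto (⟪a, y ·⟫) l atBot := by
  refine (hy.atTop_mul_neg ha
    (((continuous_const.inner continuous_id).tendsto w).comp hu)).congr' ?_
  filter_upwards [hy.eventually_gt_atTop 0] with n hn
  simp [inner_smul_right, hn.ne']

lemma inner_nonpos_of_eventually_le [l.NeBot] {C : ℝ} (hy : Tendsto (‖y ·‖) l atTop)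
    (hu : Tendsto (fun n => ‖y n‖⁻¹ • y n) l (𝓝 w)) (hC : ∀ᶠ n in l, ⟪a, y n⟫ ≤ C) :
    ⟪a, w⟫ ≤ 0 := by
  by_contra! h
  have hneg := tendsto_inner_atBot_of_inner_neg (a := -a) hy hu (by simpa using h)
  obtain ⟨n, hn, hCn⟩ := ((hneg.eventually_lt_atBot (-C)).and hC).exists
  simp only [inner_neg_left] at hn
  linarith

end Asymptotic

section Hoffman

variable {E ι : Type*} [NormedAddCommGroup E] [InnerProductSpace ℝ E]
  {s : Finset ι} {a : ι → E} {b : ι → ℝ} {δ : ℝ} {y : ℕ → E} {ε : ℕ → ℝ}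

lemma tendsto_norm_atTop_of_notMem_thickening_polyhedron [ProperSpace E] (hδ : 0 < δ)
    (hε : Tendsto ε atTop (𝓝 0)) (hy : ∀ n, y n ∈ polyhedron s a (b · + ε n))
    (hyδ : ∀ n, y n ∉ thickening δ (polyhedron s a b)) : Tendsto (‖y ·‖) atTop atTop := by
  by_contra h
  rw [Filter.tendsto_atTop] at h
  push Not at h
  obtain ⟨C, hC⟩ := h
  obtain ⟨φ, hφ, hφC⟩ := extraction_of_frequently_atTop hC
  obtain ⟨z, -, ψ, hψ, hlim⟩ := (isCompact_closedBall (0 : E) C).tendsto_subseq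
    (x := y ∘ φ) fun n => mem_closedBall_zero_iff.2 (hφC n).le
  have hmono := (hφ.comp hψ).tendsto_atTop
  have hz : z ∈ polyhedron s a b :=
    mem_polyhedron_of_tendsto hlim (hε.comp hmono) (.of_forall fun n => hy _)
  have hzδ : z ∉ thickening δ (polyhedron s a b) :=
    isOpen_thickening.isClosed_compl.mem_of_tendsto hlim (.of_forall fun n => hyδ _)
  exact hzδ (self_subset_thickening hδ _ hz)

lemma exists_mem_thickening_polyhedron_of_tendsto_norm [ProperSpace E]
    (ih : ∀ t ⊂ s, ∃ ε > 0, polyhedron t a (b · + ε) ⊆ thickening δ (polyhedron t a b))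
    (hε : Tendsto ε atTop (𝓝 0)) (hy : ∀ n, y n ∈ polyhedron s a (b · + ε n))
    (hyK : ∀ n, y n ∈ (lineality s a)ᗮ) (hnorm : Tendsto (‖y ·‖) atTop atTop) :
    ∃ n, y n ∈ thickening δ (polyhedron s a b) := by
  obtain ⟨w, hw, φ, hφ, hu⟩ := exists_subseq_tendsto_inv_norm_smul hnorm
  have hnormφ := hnorm.comp hφ.tendsto_atTop
  have hεφ := hε.comp hφ.tendsto_atTop
  have hwK : w ∈ (lineality s a)ᗮ := (lineality s a).isClosed_orthogonal.mem_of_tendsto hu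
    (.of_forall fun n => (lineality s a)ᗮ.smul_mem _ (hyK _))
  have hrec : ∀ i ∈ s, ⟪a i, w⟫ ≤ 0 := fun i hi =>
    inner_nonpos_of_eventually_le hnormφ hu (C := b i + 1) <|
      (hεφ.eventually (ge_mem_nhds one_pos)).mono fun n hn => (hy _ i hi).trans (by simpa using hn)
  obtain ⟨i₀, hi₀, hwi₀⟩ :=
    exists_inner_ne_zero_of_mem_orthogonal_lineality hwK (norm_ne_zero_iff.1 (by simp [hw]))
  obtain ⟨ε₀, hε₀, hsub⟩ := ih (s.filter (⟪a ·, w⟫ = 0)) (Finset.filter_ssubset.2 ⟨i₀, hi₀, hwi₀⟩)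
  have hmargin : ∀ᶠ n in atTop, ∀ i ∈ s, i ∉ s.filter (⟪a ·, w⟫ = 0) →
      ⟪a i, y (φ n)⟫ + ‖a i‖ * δ ≤ b i := by
    refine (eventually_all_finset s).2 fun i hi => ?_
    by_cases hwi : ⟪a i, w⟫ = 0
    · exact .of_forall fun n hn => absurd (Finset.mem_filter.2 ⟨hi, hwi⟩) hn
    · have := tendsto_inner_atBot_of_inner_neg hnormφ hu ((hrec i hi).lt_of_ne hwi)
      filter_upwards [this.eventually_le_atBot (b i - ‖a i‖ * δ)] with n hn _
      linarith
  obtain ⟨n, hsmall, hn⟩ := ((hεφ.eventually (ge_mem_nhds hε₀)).and hmargin).exists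
  refine ⟨φ n, mem_thickening_polyhedron_of_margin (hsub ?_) hn⟩
  exact polyhedron_subset_polyhedron (Finset.filter_subset _ s) (fun i _ => by simpa using hsmall)
    (hy (φ n))

theorem exists_polyhedron_relax_subset_thickening [FiniteDimensional ℝ E] (s : Finset ι)
    (hne : (polyhedron s a b).Nonempty) (hδ : 0 < δ) :
    ∃ ε > 0, polyhedron s a (b · + ε) ⊆ thickening δ (polyhedron s a b) := by
  induction s using Finset.strongInduction with | H s ih => ?_
  by_contra! hbad
  have hbadseq : ∀ n : ℕ, ∃ y ∈ (lineality s a)ᗮ,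
      y ∈ polyhedron s a (b · + 1 / (n + 1)) ∧ y ∉ thickening δ (polyhedron s a b) := by
    intro n
    obtain ⟨x, hx, hxδ⟩ := not_subset.1 (hbad (1 / (n + 1)) Nat.one_div_pos_of_nat)
    obtain ⟨v, hv, y, hy, rfl⟩ := (lineality s a).exists_add_mem_mem_orthogonal x
    rw [add_comm v y] at hx hxδ
    exact ⟨y, hy, (add_mem_polyhedron_iff hv).1 hx,
      fun hyδ => hxδ (add_mem_thickening_polyhedron hv hyδ)⟩
  choose y hyK hy hyδ using hbadseq
  have hε : Tendsto (fun n : ℕ => 1 / ((n : ℝ) + 1)) atTop (𝓝 0) :=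
    tendsto_one_div_add_atTop_nhds_zero_nat
  have ih' : ∀ t ⊂ s, ∃ ε > 0, polyhedron t a (b · + ε) ⊆ thickening δ (polyhedron t a b) :=
    fun t hts => ih t hts (hne.mono (polyhedron_subset_polyhedron hts.subset fun _ _ => le_rfl))
  obtain ⟨n, hn⟩ := exists_mem_thickening_polyhedron_of_tendsto_norm ih' hε hy hyK
    (tendsto_norm_atTop_of_notMem_thickening_polyhedron hδ hε hy hyδ)
  exact hyδ n hn

end Hoffman

lemma iInter_polyhedron {E J : Type*} [NormedAddCommGroup E] [InnerProductSpace ℝ E]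
    {κ : J → Type*} [Fintype J] [∀ j, Fintype (κ j)] (a : ∀ j, κ j → E) (b : ∀ j, κ j → ℝ) :
    ⋂ j, polyhedron Finset.univ (a j) (b j) =
      polyhedron Finset.univ (fun i : Σ j, κ j => a i.1 i.2) (fun i => b i.1 i.2) := by
  ext x
  simp [Sigma.forall]

lemma exists_pos_forall_mul_le {J : Type*} [Finite J] (c : J → ℝ) {ε₀ : ℝ} (hε₀ : 0 < ε₀) :
    ∃ ε > 0, ∀ j, c j * ε ≤ ε₀ := by
  have h : ∀ j, ∀ᶠ ε in 𝓝[>] (0 : ℝ), c j * ε ≤ ε₀ := fun j =>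
    nhdsWithin_le_nhds <| ((continuous_const_mul (c j)).tendsto' 0 0 (mul_zero _)).eventually
      (ge_mem_nhds hε₀)
  exact ((eventually_all.2 h).and self_mem_nhdsWithin).exists.imp fun ε h => ⟨h.2, h.1⟩

/-- For closed convex polyhedra `U₁, …, U_m` with nonempty intersection and
any `δ > 0`, some `ε > 0` satisfies `⋂ⱼ B(Uⱼ, ε) ⊆ B(⋂ⱼ Uⱼ, δ)`. -/
theorem thickened_intersection_subset_thickening_of_intersection
    {d m : ℕ} (U : Fin m → Set (EuclideanSpace ℝ (Fin d)))
    (hpoly : ∀ j, IsEuclideanPolyhedron (U j))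
    (hne : (⋂ j, U j).Nonempty) (δ : ℝ) (hδ : 0 < δ) :
    ∃ ε > 0, (⋂ j, Metric.thickening ε (U j)) ⊆ Metric.thickening δ (⋂ j, U j) := by
  choose k a b hU using hpoly
  have hU' : ∀ j, U j = polyhedron Finset.univ (a j) (b j) := fun j => by
    simp [hU j, polyhedron, PiLp.inner_apply, mul_comm]
  simp only [hU', iInter_polyhedron] at hne ⊢
  obtain ⟨ε₀, hε₀, hsub⟩ := exists_polyhedron_relax_subset_thickening _ hne hδ
  obtain ⟨ε, hε, hεa⟩ := exists_pos_forall_mul_le (fun i : Σ j, Fin (k j) => ‖a i.1 i.2‖) hε₀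
  refine ⟨ε, hε, (iInter_mono fun j => thickening_polyhedron_subset).trans ?_⟩
  rw [iInter_polyhedron]
  exact (polyhedron_subset_polyhedron subset_rfl fun i _ => by simpa using hεa i).trans hsub
end

section
/- Let U_1, …, U_m be nonempty closed convex polyhedra in ℝ^d with ⋂_{j=1}^m U_j = ∅. Then there exists ε > 0 such that ⋂_{j=1}^m B(U_j, ε) = ∅. -/
/-!
Write all the polyhedra as a single finite system `⟪aᵢ, x⟫ ≤ bᵢ`. It has no solution, so by
Farkas' lemma some `λ ≥ 0` has `∑ λᵢ aᵢ = 0` and `∑ λᵢ bᵢ = -1`. A point of every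
`ε`-thickening violates each inequality by at most `ε ‖aᵢ‖`, and pairing it with `∑ λᵢ aᵢ = 0`
gives `0 ≤ -1 + ε ∑ λᵢ ‖aᵢ‖`, which fails for small `ε`.

Farkas' lemma is proved by separating `(0, -1)` from the cone generated by the `(aᵢ, bᵢ)`; that
cone is closed by the conic Carathéodory argument: if the generators are dependent, every point
of the cone already lies in the cone of all generators but one.
-/

open Set
open scoped InnerProductSpace

namespace PointedCone

section Algebra

variable {ι E : Type*} [Fintype ι] [AddCommGroup E] [Module ℝ E]

theorem coe_hull_range_eq_image (v : ι → E) :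
    (hull ℝ (range v) : Set E) = Fintype.linearCombination ℝ v '' Ici 0 := by
  ext x
  simp only [SetLike.mem_coe, Submodule.mem_span_range_iff_exists_fun, mem_image, mem_Ici,
    Fintype.linearCombination_apply]
  constructor
  · rintro ⟨c, rfl⟩
    exact ⟨fun i => c i, fun i => (c i).2, by simp [Nonneg.coe_smul]⟩
  · rintro ⟨c, hc, rfl⟩
    exact ⟨fun i => ⟨c i, hc i⟩, by simp [Nonneg.mk_smul]⟩

theorem exists_nonneg_eq_zero_linearCombination_eq_of_not_linearIndependent
    {v : ι → E} (hv : ¬LinearIndependent ℝ v) {c : ι → ℝ} (hc : 0 ≤ c) :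
    ∃ c' : ι → ℝ, 0 ≤ c' ∧ (∃ j, c' j = 0) ∧
      Fintype.linearCombination ℝ v c' = Fintype.linearCombination ℝ v c := by
  obtain ⟨g, hg, hpos⟩ : ∃ g : ι → ℝ, Fintype.linearCombination ℝ v g = 0 ∧ ∃ i, 0 < g i := by
    obtain ⟨g, hg, i, hi⟩ := Fintype.not_linearIndependent_iff.mp hv
    rw [← Fintype.linearCombination_apply] at hg
    rcases hi.lt_or_gt with hneg | hpos
    · exact ⟨-g, by simp [hg], i, by simpa using hneg⟩
    · exact ⟨g, hg, i, hpos⟩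
  -- Move along the dependency `g` until the first coefficient hits zero.
  obtain ⟨j, hj, hmin⟩ := Finset.exists_min_image {i | 0 < g i} (fun i => c i / g i)
    (by simpa [Finset.Nonempty] using hpos)
  rw [Finset.mem_filter_univ] at hj
  set t := c j / g j
  refine ⟨c - t • g, fun i => ?_, ⟨j, ?_⟩, by simp [hg]⟩
  · rcases lt_or_ge 0 (g i) with hgi | hgi
    · have : t * g i ≤ c i := (le_div_iff₀ hgi).mp (hmin i (by simpa using hgi))
      simpa using this
    · have : t * g i ≤ 0 := mul_nonpos_of_nonneg_of_nonpos (div_nonneg (hc j) hj.le) hgi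
      simpa using this.trans (hc i)
  · simp [t, div_mul_cancel₀ _ hj.ne']

theorem coe_hull_range_eq_iUnion_of_not_linearIndependent {n : ℕ} {v : Fin (n + 1) → E}
    (hv : ¬LinearIndependent ℝ v) :
    (hull ℝ (range v) : Set E) = ⋃ j : Fin (n + 1), (hull ℝ (range (v ∘ j.succAbove)) : Set E) := by
  refine subset_antisymm ?_
    (iUnion_subset fun j => Submodule.span_mono (range_comp_subset_range j.succAbove v))
  rw [coe_hull_range_eq_image]
  rintro _ ⟨c, hc, rfl⟩
  obtain ⟨c', hc', ⟨j, hj⟩, hcc'⟩ :=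
    exists_nonneg_eq_zero_linearCombination_eq_of_not_linearIndependent hv hc
  refine mem_iUnion.mpr ⟨j, ?_⟩
  rw [← hcc', coe_hull_range_eq_image]
  refine ⟨c' ∘ j.succAbove, fun i => hc' _, ?_⟩
  simp [Fintype.linearCombination_apply, Fin.sum_univ_succAbove _ j, hj]

end Algebra

section Topology

variable {E : Type*} [AddCommGroup E] [TopologicalSpace E] [IsTopologicalAddGroup E]
  [Module ℝ E] [ContinuousSMul ℝ E] [T2Space E]

theorem isClosed_hull_range_of_linearIndependent {ι : Type*} [Fintype ι] {v : ι → E}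
    (hv : LinearIndependent ℝ v) : IsClosed (hull ℝ (range v) : Set E) := by
  rw [coe_hull_range_eq_image]
  refine (LinearMap.isClosedEmbedding_of_injective ?_).isClosedMap _ isClosed_Ici
  exact LinearMap.ker_eq_bot.mpr (linearIndependent_iff_injective_fintypeLinearCombination.mp hv)

theorem isClosed_hull_range_fin : ∀ {n : ℕ} (v : Fin n → E), IsClosed (hull ℝ (range v) : Set E)
  | 0, _ => isClosed_hull_range_of_linearIndependent linearIndependent_empty_type
  | n + 1, v => by
    by_cases hv : LinearIndependent ℝ v
    · exact isClosed_hull_range_of_linearIndependent hv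
    · rw [coe_hull_range_eq_iUnion_of_not_linearIndependent hv]
      exact isClosed_iUnion_of_finite fun j => isClosed_hull_range_fin _

theorem isClosed_hull_range {ι : Type*} [Finite ι] (v : ι → E) :
    IsClosed (hull ℝ (range v) : Set E) := by
  obtain ⟨n, ⟨e⟩⟩ := Finite.exists_equiv_fin ι
  simpa [EquivLike.range_comp] using isClosed_hull_range_fin (v ∘ e.symm)

end Topology

end PointedCone

theorem ContinuousLinearMap.apply_prod_eq_add_mul {F : Type*} [AddCommGroup F] [Module ℝ F]
    [TopologicalSpace F] (f : StrongDual ℝ (F × ℝ)) (x : F) (t : ℝ) :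
    f (x, t) = f (x, 0) + t * f (0, 1) := by
  rw [← smul_eq_mul, ← map_smul, ← map_add]
  simp

section InnerProductSpace

variable {ι H : Type*} [Fintype ι] [NormedAddCommGroup H] [InnerProductSpace ℝ H]

theorem exists_nonneg_sum_smul_eq_zero_of_forall_exists_lt_inner [CompleteSpace H]
    (a : ι → H) (b : ι → ℝ) (h : ∀ x : H, ∃ i, b i < ⟪a i, x⟫_ℝ) :
    ∃ l : ι → ℝ, 0 ≤ l ∧ ∑ i, l i • a i = 0 ∧ ∑ i, l i * b i = -1 := by
  let C : ProperCone ℝ (H × ℝ) :=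
    ⟨PointedCone.hull ℝ (range fun i => (a i, b i)), PointedCone.isClosed_hull_range _⟩
  by_cases hC : ((0 : H), (-1 : ℝ)) ∈ C
  · obtain ⟨l, hl, hsum⟩ :
        ((0 : H), (-1 : ℝ)) ∈ Fintype.linearCombination ℝ (fun i => (a i, b i)) '' Ici 0 := by
      rw [← PointedCone.coe_hull_range_eq_image]; exact hC
    simp only [Fintype.linearCombination_apply, Prod.ext_iff, Prod.fst_sum, Prod.snd_sum,
      Prod.smul_fst, Prod.smul_snd, smul_eq_mul] at hsum
    exact ⟨l, hl, hsum⟩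
  · obtain ⟨f, hfC, hf⟩ := ProperCone.hyperplane_separation_point C hC
    set s := f (0, 1)
    have hs : 0 < s := by
      rw [show ((0 : H), (-1 : ℝ)) = -(0, 1) by simp, map_neg] at hf
      exact neg_neg_iff_pos.mp hf
    -- The Riesz representative `y` of `x ↦ f (x, 0)` gives the solution `-s⁻¹ • y`.
    set y := (InnerProductSpace.toDual ℝ H).symm (f.comp (.inl ℝ H ℝ))
    obtain ⟨i, hi⟩ := h (-s⁻¹ • y)
    have hfi : 0 ≤ f (a i, 0) + b i * s :=
      f.apply_prod_eq_add_mul (a i) (b i) ▸ hfC _ (PointedCone.subset_hull (mem_range_self i))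
    rw [inner_smul_right, real_inner_comm, InnerProductSpace.toDual_symm_apply, neg_mul,
      inv_mul_eq_div, lt_neg, div_lt_iff₀ hs] at hi
    simp only [ContinuousLinearMap.comp_apply, ContinuousLinearMap.inl_apply] at hi
    linarith

theorem exists_pos_forall_exists_add_mul_norm_lt_inner [CompleteSpace H]
    (a : ι → H) (b : ι → ℝ) (h : ∀ x : H, ∃ i, b i < ⟪a i, x⟫_ℝ) :
    ∃ ε > 0, ∀ x : H, ∃ i, b i + ε * ‖a i‖ < ⟪a i, x⟫_ℝ := by
  obtain ⟨l, hl, hla, hlb⟩ := exists_nonneg_sum_smul_eq_zero_of_forall_exists_lt_inner a b h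
  set S := ∑ i, l i * ‖a i‖
  have hS : 0 ≤ S := Finset.sum_nonneg fun i _ => mul_nonneg (hl i) (norm_nonneg _)
  refine ⟨(S + 1)⁻¹, by positivity, fun x => ?_⟩
  by_contra! hx
  have hsmall : (S + 1)⁻¹ * S < 1 := by
    rw [inv_mul_lt_iff₀ (by positivity)]; linarith
  have := calc
    (0 : ℝ) = ⟪∑ i, l i • a i, x⟫_ℝ := by rw [hla, inner_zero_left]
    _ = ∑ i, l i * ⟪a i, x⟫_ℝ := by simp only [sum_inner, real_inner_smul_left]
    _ ≤ ∑ i, l i * (b i + (S + 1)⁻¹ * ‖a i‖) :=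
      Finset.sum_le_sum fun i _ => mul_le_mul_of_nonneg_left (hx i) (hl i)
    _ = -1 + (S + 1)⁻¹ * S := by
      rw [← hlb, Finset.mul_sum, ← Finset.sum_add_distrib]
      exact Finset.sum_congr rfl fun i _ => by ring
  linarith

theorem inner_le_add_mul_norm_of_mem_thickening {s : Set H} {a : H} {b ε : ℝ}
    (hs : ∀ y ∈ s, ⟪a, y⟫_ℝ ≤ b) {x : H} (hx : x ∈ Metric.thickening ε s) :
    ⟪a, x⟫_ℝ ≤ b + ε * ‖a‖ := by
  obtain ⟨y, hy, hxy⟩ := Metric.mem_thickening_iff.mp hx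
  calc ⟪a, x⟫_ℝ = ⟪a, y⟫_ℝ + ⟪a, x - y⟫_ℝ := by rw [inner_sub_right]; ring
    _ ≤ b + ‖a‖ * ‖x - y‖ := add_le_add (hs y hy) (real_inner_le_norm _ _)
    _ ≤ b + ε * ‖a‖ := by
      rw [mul_comm ε, ← dist_eq_norm]; gcongr

end InnerProductSpace

theorem IsEuclideanPolyhedron.exists_eq_setOf_inner_le {d : ℕ}
    {S : Set (EuclideanSpace ℝ (Fin d))} (hS : IsEuclideanPolyhedron S) :
    ∃ (m : ℕ) (a : Fin m → EuclideanSpace ℝ (Fin d)) (b : Fin m → ℝ),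
      S = {x | ∀ i, ⟪a i, x⟫_ℝ ≤ b i} := by
  obtain ⟨m, a, b, rfl⟩ := hS
  exact ⟨m, a, b, by simp [PiLp.inner_apply, mul_comm]⟩

theorem thickened_intersection_empty_of_empty_intersection_general
    {d m : ℕ} (U : Fin m → Set (EuclideanSpace ℝ (Fin d)))
    (hpoly : ∀ j, IsEuclideanPolyhedron (U j))
    (hempty : (⋂ j, U j) = ∅) :
    ∃ ε > 0, (⋂ j, Metric.thickening ε (U j)) = ∅ := by
  choose M a b hU using fun j => (hpoly j).exists_eq_setOf_inner_le
  have hinfeasible : ∀ x, ∃ p : (j : Fin m) × Fin (M j), b p.1 p.2 < ⟪a p.1 p.2, x⟫_ℝ := by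
    intro x
    have hx : x ∉ ⋂ j, U j := hempty ▸ notMem_empty x
    simpa [hU] using hx
  obtain ⟨ε, hε, hviolated⟩ := exists_pos_forall_exists_add_mul_norm_lt_inner _ _ hinfeasible
  refine ⟨ε, hε, eq_empty_of_forall_notMem fun x hx => ?_⟩
  obtain ⟨⟨j, i⟩, hi⟩ := hviolated x
  have hhalf : ∀ y ∈ U j, ⟪a j i, y⟫_ℝ ≤ b j i := by
    rw [hU j]; exact fun y hy => hy i
  have := inner_le_add_mul_norm_of_mem_thickening hhalf (mem_iInter.mp hx j)
  linarith

/-- For nonempty closed convex polyhedra `U₁, …, U_m` with empty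
intersection, some `ε > 0` makes the intersection of the `ε`-thickenings empty. -/
theorem thickened_intersection_empty_of_empty_intersection
    {d m : ℕ} (U : Fin m → Set (EuclideanSpace ℝ (Fin d)))
    (hpoly : ∀ j, IsEuclideanPolyhedron (U j)) (hUne : ∀ j, (U j).Nonempty)
    (hempty : (⋂ j, U j) = ∅) :
    ∃ ε > 0, (⋂ j, Metric.thickening ε (U j)) = ∅ :=
  thickened_intersection_empty_of_empty_intersection_general U hpoly hempty
end

section
/- Let N = {1, …, k} and let f : 2^N → ℝ be submodular and normalized. Then for all disjoint sets A, B ⊆ N: 2^{−k} ∑_{S⊆N} [ f((A △ S) \ B) + f((A △ S) ∪ B) ] ≥ f(N), where △ denotes symmetric difference. Moreover, when B = ∅ this quantity equals 2 f̄, where f̄ = 2^{−k} ∑_{S⊆N} f(S). -/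
/-- A set function on `N = {1, …, k}` is submodular if
`f (S ∪ T) + f (S ∩ T) ≤ f S + f T` for all `S, T`. -/
def Submodular {k : ℕ} (f : Finset (Fin k) → ℝ) : Prop :=
  ∀ S T : Finset (Fin k), f (S ∪ T) + f (S ∩ T) ≤ f S + f T

/-- A set function is modular if `f (S ∪ T) + f (S ∩ T) = f S + f T` for all `S, T`. -/
def Modular {k : ℕ} (f : Finset (Fin k) → ℝ) : Prop :=
  ∀ S T : Finset (Fin k), f (S ∪ T) + f (S ∩ T) = f S + f T

/-- For submodular normalized `f` and disjoint `A, B ⊆ N`: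
`2^{-k} ∑_S [f((A △ S) \ B) + f((A △ S) ∪ B)] ≥ f(N)`; moreover for `B = ∅` this quantity
equals `2 f̄` where `f̄ = 2^{-k} ∑_S f(S)`. -/
theorem expected_embedded_lovasz_loss_ge_top
    {k : ℕ} (f : Finset (Fin k) → ℝ) (hsub : Submodular f) (hnorm : f ∅ = 0) :
    (∀ A B : Finset (Fin k), Disjoint A B →
      f Finset.univ ≤
        (∑ S : Finset (Fin k), (f (symmDiff A S \ B) + f (symmDiff A S ∪ B))) / 2 ^ k) ∧
    (∀ A : Finset (Fin k),
      (∑ S : Finset (Fin k),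
          (f (symmDiff A S \ (∅ : Finset (Fin k))) + f (symmDiff A S ∪ (∅ : Finset (Fin k)))))
            / 2 ^ k
        = 2 * ((∑ S : Finset (Fin k), f S) / 2 ^ k)) := by
  have hcard : (Fintype.card (Finset (Fin k)) : ℝ) = 2 ^ k := by
    simp [Fintype.card_finset]
  constructor
  · intro A B _
    rw [le_div_iff₀ (by positivity)]
    have key : ∀ S : Finset (Fin k),
        f Finset.univ ≤ f (symmDiff A S \ B) + f ((symmDiff A S)ᶜ ∪ B) := by
      intro S
      have h := hsub (symmDiff A S \ B) ((symmDiff A S)ᶜ ∪ B)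
      have hu : (symmDiff A S \ B) ∪ ((symmDiff A S)ᶜ ∪ B) = Finset.univ := by
        ext x
        simp only [Finset.mem_union, Finset.mem_sdiff, Finset.mem_compl, Finset.mem_univ,
          iff_true]
        tauto
      have hi : (symmDiff A S \ B) ∩ ((symmDiff A S)ᶜ ∪ B) = ∅ := by
        ext x
        simp only [Finset.mem_inter, Finset.mem_union, Finset.mem_sdiff, Finset.mem_compl,
          Finset.notMem_empty, iff_false]
        tauto
      rw [hu, hi, hnorm] at h
      linarith
    have ecompl : Equiv.Perm (Finset (Fin k)) :=
      ⟨fun S => Sᶜ, fun S => Sᶜ, fun S => compl_compl S, fun S => compl_compl S⟩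
    have h2 : ∑ S : Finset (Fin k), f (symmDiff A S ∪ B)
        = ∑ S : Finset (Fin k), f ((symmDiff A S)ᶜ ∪ B) := by
      apply Fintype.sum_equiv
        (⟨fun S => Sᶜ, fun S => Sᶜ, fun S => compl_compl S, fun S => compl_compl S⟩ :
          Equiv.Perm (Finset (Fin k)))
      intro S
      have : symmDiff A S = (symmDiff A Sᶜ)ᶜ := by
        ext x
        simp only [Finset.mem_symmDiff, Finset.mem_compl, Finset.mem_symmDiff]
        tauto
      simp only [Equiv.coe_fn_mk, this]
    have hsum : (2 : ℝ) ^ k * f Finset.univ ≤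
        ∑ S : Finset (Fin k), (f (symmDiff A S \ B) + f ((symmDiff A S)ᶜ ∪ B)) := by
      calc (2 : ℝ) ^ k * f Finset.univ
          = ∑ _S : Finset (Fin k), f Finset.univ := by
            rw [Finset.sum_const, Finset.card_univ, nsmul_eq_mul, hcard]
        _ ≤ _ := Finset.sum_le_sum fun S _ => key S
    rw [Finset.sum_add_distrib, h2]
    rw [Finset.sum_add_distrib] at hsum
    linarith
  · intro A
    have h1 : ∑ S : Finset (Fin k), f (symmDiff A S) = ∑ S : Finset (Fin k), f S := by
      apply Fintype.sum_equiv
        (⟨fun S => symmDiff A S, fun S => symmDiff A S,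
          fun S => symmDiff_symmDiff_cancel_left A S,
          fun S => symmDiff_symmDiff_cancel_left A S⟩ : Equiv.Perm (Finset (Fin k)))
      intro S
      simp
    simp only [Finset.sdiff_empty, Finset.union_empty]
    rw [Finset.sum_add_distrib, h1]
    ring
end
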